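/- arXiv:2411.03780 — 8 statements merged into one kernel-verified Lean document; each statement's English description precedes it below -/
import Mathlib

section
/- Let J be a network Jacobian (as defined in the context) and suppose d_i > 0 for at least one vertex i. Then every eigenvalue of J, i.e., every root in ℂ of the characteristic polynomial of J, has strictly negative real part. (This is the paper's Theorem 1: any equilibrium point of the single-commodity network ODE at which the local-policy sign conditions hold is asymptotically stable.) -/
/-!
`J` has nonnegative off-diagonal entries and column sums `-d u ≤ 0`. Let `vᵀ J = z vᵀ` with
`v ≠ 0` and `0 ≤ re z`. At a vertex `u` where `‖v u‖` is maximal, the `u`-th entry gives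
`-J u u * ‖v u‖ ≤ ‖z - J u u‖ * ‖v u‖ ≤ ∑_{i ≠ u} J i u * ‖v i‖`, which forces `d u = 0` and
`‖v i‖ = ‖v u‖` at every neighbour `i` of `u`. By connectedness, `‖v‖` is then maximal at every
vertex, so `d` vanishes everywhere.
-/

open Finset

/-- A *network Jacobian*: a finite directed acyclic graph on `Fin N`
(no self-loops, at most one direction per pair, connected underlying
undirected graph), positive reals `p i j`, `n i j` on each edge `(i,j) ∈ E`
(modeling `∂g_{ij}/∂q_i > 0` and `−∂g_{ij}/∂q_j > 0`), and nonnegative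
departure derivatives `d i` at each vertex. -/
structure NetworkJacobian (N : ℕ) where
  E : Finset (Fin N × Fin N)
  no_self_loops : ∀ e ∈ E, e.1 ≠ e.2
  antisymm : ∀ i u : Fin N, (i, u) ∈ E → (u, i) ∉ E
  acyclic : ∃ rank : Fin N → ℕ, ∀ e ∈ E, rank e.1 < rank e.2
  connected : (SimpleGraph.fromRel fun i u => (i, u) ∈ E).Connected
  p : Fin N → Fin N → ℝ
  n : Fin N → Fin N → ℝ
  d : Fin N → ℝ
  p_pos : ∀ e ∈ E, 0 < p e.1 e.2
  n_pos : ∀ e ∈ E, 0 < n e.1 e.2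
  d_nonneg : ∀ i, 0 ≤ d i

/-- The matrix `J` associated to a network Jacobian:
`J i u = n i u` if `(i,u) ∈ E`, `J i u = p u i` if `(u,i) ∈ E`, `J i u = 0`
for other `i ≠ u`, and
`J u u = −Σ_{k:(k,u)∈E} n k u − Σ_{j:(u,j)∈E} p u j − d u`. -/
noncomputable def NetworkJacobian.J {N : ℕ} (G : NetworkJacobian N) :
    Matrix (Fin N) (Fin N) ℝ := fun i u =>
  if i = u then
    -(∑ k ∈ Finset.univ.filter fun k => (k, u) ∈ G.E, G.n k u)
      - (∑ j ∈ Finset.univ.filter fun j => (u, j) ∈ G.E, G.p u j) - G.d u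
  else if (i, u) ∈ G.E then G.n i u
  else if (u, i) ∈ G.E then G.p u i
  else 0

namespace Matrix

variable {ι : Type*} [Fintype ι] [DecidableEq ι]

theorem exists_vecMul_eq_smul_of_isRoot_charpoly {K : Type*} [Field K] {M : Matrix ι ι K} {z : K}
    (hz : M.charpoly.IsRoot z) : ∃ v ≠ 0, v ᵥ* M = z • v := by
  have hdet : (scalar ι z - M).det = 0 := by rw [← eval_charpoly]; exact hz
  obtain ⟨v, hv0, hv⟩ := exists_vecMul_eq_zero_iff.mpr hdet
  refine ⟨v, hv0, ?_⟩
  rw [vecMul_sub, sub_eq_zero] at hv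
  rw [← hv]
  ext i
  simp [scalar_apply, vecMul_diagonal, mul_comm]

variable {A : Matrix ι ι ℝ} {v : ι → ℂ} {z : ℂ} {u : ι}

theorem sum_mul_norm_nonneg_of_vecMul_eq_smul (hv : v ᵥ* A.map (↑) = z • v) (hz : 0 ≤ z.re)
    (hoff : ∀ i, i ≠ u → 0 ≤ A i u) : 0 ≤ ∑ i, A i u * ‖v i‖ := by
  have heq : (z - A u u) * v u = ∑ i ∈ univ.erase u, (A i u : ℂ) * v i := by
    have hu := congrFun hv u
    simp only [vecMul, dotProduct, map_apply, Pi.smul_apply, smul_eq_mul] at hu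
    rw [← add_sum_erase _ _ (mem_univ u)] at hu
    simp only [mul_comm (v _)] at hu
    linear_combination -hu
  have hdiag : -A u u ≤ ‖z - A u u‖ := by
    refine le_trans ?_ (Complex.re_le_norm _)
    simp only [Complex.sub_re, Complex.ofReal_re]
    linarith
  have hbound : -A u u * ‖v u‖ ≤ ∑ i ∈ univ.erase u, A i u * ‖v i‖ :=
    calc -A u u * ‖v u‖ ≤ ‖z - A u u‖ * ‖v u‖ := by gcongr
      _ = ‖∑ i ∈ univ.erase u, (A i u : ℂ) * v i‖ := by rw [← norm_mul, heq]
      _ ≤ ∑ i ∈ univ.erase u, ‖(A i u : ℂ) * v i‖ := norm_sum_le _ _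
      _ = ∑ i ∈ univ.erase u, A i u * ‖v i‖ := by
        refine sum_congr rfl fun i hi => ?_
        rw [norm_mul, Complex.norm_real, Real.norm_eq_abs,
          abs_of_nonneg (hoff i (ne_of_mem_erase hi))]
  rw [← add_sum_erase _ _ (mem_univ u)]
  linarith

theorem sum_col_eq_zero_of_vecMul_eq_smul_of_isMax (hv : v ᵥ* A.map (↑) = z • v)
    (hz : 0 ≤ z.re) (hoff : ∀ i, i ≠ u → 0 ≤ A i u) (hcol : ∑ i, A i u ≤ 0) (hu : v u ≠ 0)
    (hmax : ∀ i, ‖v i‖ ≤ ‖v u‖) :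
    ∑ i, A i u = 0 ∧ ∀ i, 0 < A i u → ‖v i‖ = ‖v u‖ := by
  have hnonneg := sum_mul_norm_nonneg_of_vecMul_eq_smul hv hz hoff
  have hsplit : ∑ i, A i u * ‖v i‖ =
      (∑ i, A i u) * ‖v u‖ + ∑ i, A i u * (‖v i‖ - ‖v u‖) := by
    rw [sum_mul, ← sum_add_distrib]
    exact sum_congr rfl fun i _ => by ring
  have hterm : ∀ i ∈ univ, A i u * (‖v i‖ - ‖v u‖) ≤ 0 := by
    intro i _
    by_cases hi : i = u
    · simp [hi]
    · exact mul_nonpos_of_nonneg_of_nonpos (hoff i hi) (by linarith [hmax i])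
  have hm : 0 < ‖v u‖ := norm_pos_iff.mpr hu
  have hcol_mul : (∑ i, A i u) * ‖v u‖ ≤ 0 := mul_nonpos_of_nonpos_of_nonneg hcol hm.le
  have hdev := sum_nonpos hterm
  refine ⟨?_, fun i hi => ?_⟩
  · have : (∑ i, A i u) * ‖v u‖ = 0 := by linarith
    exact (mul_eq_zero.mp this).resolve_right hm.ne'
  · have hzero := (sum_eq_zero_iff_of_nonpos hterm).mp (by linarith) i (mem_univ i)
    have := (mul_eq_zero.mp hzero).resolve_left hi.ne'
    linarith

theorem re_neg_of_isRoot_charpoly (A : Matrix ι ι ℝ) (H : SimpleGraph ι) (hH : H.Connected)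
    (hoff : ∀ i u, i ≠ u → 0 ≤ A i u) (hadj : ∀ i u, H.Adj u i → 0 < A i u)
    (hcol : ∀ u, ∑ i, A i u ≤ 0) (hstrict : ∃ u, ∑ i, A i u < 0) (z : ℂ)
    (hz : (A.map (↑)).charpoly.IsRoot z) : z.re < 0 := by
  by_contra! hre
  obtain ⟨v, hv0, hv⟩ := exists_vecMul_eq_smul_of_isRoot_charpoly hz
  obtain ⟨u₀, -, hu₀⟩ := exists_max_image univ (‖v ·‖) (univ_nonempty_iff.mpr hH.nonempty)
  have hm : ‖v u₀‖ ≠ 0 := by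
    contrapose! hv0
    ext i
    exact norm_le_zero_iff.mp (hv0 ▸ hu₀ i (mem_univ i))
  have hstep : ∀ u, ‖v u‖ = ‖v u₀‖ →
      ∑ i, A i u = 0 ∧ ∀ i, H.Adj u i → ‖v i‖ = ‖v u₀‖ := by
    intro u hu
    obtain ⟨hsum, hnorm⟩ := sum_col_eq_zero_of_vecMul_eq_smul_of_isMax hv hre (hoff · u)
      (hcol u) (norm_ne_zero_iff.mp (hu ▸ hm)) (fun i => hu ▸ hu₀ i (mem_univ i))
    exact ⟨hsum, fun i hi => (hnorm i (hadj i u hi)).trans hu⟩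
  have hall : ∀ u, ‖v u‖ = ‖v u₀‖ := by
    intro u
    induction (SimpleGraph.reachable_iff_reflTransGen u₀ u).mp (hH.preconnected u₀ u) with
    | refl => rfl
    | tail _ hadj ih => exact (hstep _ ih).2 _ hadj
  obtain ⟨u, hu⟩ := hstrict
  linarith [(hstep u (hall u)).1]

end Matrix

namespace NetworkJacobian

variable {N : ℕ} (G : NetworkJacobian N) {i u : Fin N}

theorem J_apply_of_ne (h : i ≠ u) :
    G.J i u = (if (i, u) ∈ G.E then G.n i u else 0) + (if (u, i) ∈ G.E then G.p u i else 0) := by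
  by_cases hiu : (i, u) ∈ G.E
  · simp [J, h, hiu, G.antisymm i u hiu]
  · simp [J, h, hiu]

theorem J_apply_self : G.J u u = -(∑ k, if (k, u) ∈ G.E then G.n k u else 0)
    - (∑ j, if (u, j) ∈ G.E then G.p u j else 0) - G.d u := by
  simp [J, sum_filter]

theorem J_nonneg_of_ne (h : i ≠ u) : 0 ≤ G.J i u := by
  rw [G.J_apply_of_ne h]
  refine add_nonneg ?_ ?_ <;> split_ifs with hE
  exacts [(G.n_pos _ hE).le, le_rfl, (G.p_pos _ hE).le, le_rfl]

theorem J_pos_of_mem (h : (i, u) ∈ G.E ∨ (u, i) ∈ G.E) : 0 < G.J i u := by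
  rcases h with hE | hE
  · rw [G.J_apply_of_ne (G.no_self_loops _ hE), if_pos hE, if_neg (G.antisymm i u hE)]
    simpa using G.n_pos _ hE
  · rw [G.J_apply_of_ne (G.no_self_loops _ hE).symm, if_pos hE, if_neg (G.antisymm u i hE)]
    simpa using G.p_pos _ hE

theorem sum_J_col (u : Fin N) : ∑ i, G.J i u = -G.d u := by
  have hloop : (u, u) ∉ G.E := fun h => G.no_self_loops _ h rfl
  rw [← add_sum_erase _ _ (mem_univ u),
    sum_congr rfl fun i hi => G.J_apply_of_ne (ne_of_mem_erase hi), sum_add_distrib,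
    sum_erase _ (by simp [hloop]), sum_erase _ (by simp [hloop]), J_apply_self]
  ring

end NetworkJacobian

/-- **Theorem 1.** If `d i > 0` for at least one vertex `i`, then every
eigenvalue of the network Jacobian `J` (every complex root of its
characteristic polynomial) has strictly negative real part. -/
theorem stmt0 {N : ℕ} (G : NetworkJacobian N) (hd : ∃ i, 0 < G.d i) :
    ∀ z : ℂ, ((G.J).map (fun x : ℝ => (x : ℂ))).charpoly.IsRoot z → z.re < 0 := by
  refine Matrix.re_neg_of_isRoot_charpoly G.J _ G.connected (fun _ _ => G.J_nonneg_of_ne)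
    (fun i u hadj => G.J_pos_of_mem ((SimpleGraph.fromRel_adj _ _ _).mp hadj).2.symm)
    (fun u => by simp [G.sum_J_col, G.d_nonneg]) ?_
  obtain ⟨i, hi⟩ := hd
  exact ⟨i, by rw [G.sum_J_col]; linarith⟩
end

section
/- Suppose Condition (3) holds at every feasible point q ∈ Q. Then the system has at most one equilibrium point in Q, and at any equilibrium point q* ∈ Q every eigenvalue of the Jacobian matrix Df(q*) has strictly negative real part. (This is the paper's Theorem 2: the system either has a unique asymptotically stable equilibrium point or has no equilibrium point.) -/
/-- A single-commodity network system: a finite directed acyclic graph on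
`Fin N` (no self-loops, at most one direction per pair, connected underlying
undirected graph), buffer sizes `b i ∈ (0,∞]`, nonnegative arrival rates
`lam i`, a `C¹` policy `g i j : ℝ × ℝ → ℝ` for each edge `(i,j) ∈ E`, and a
`C¹` departure function `gT i : ℝ → ℝ` for each vertex. -/
structure SingleCommoditySystem (N : ℕ) where
  E : Finset (Fin N × Fin N)
  no_self_loops : ∀ e ∈ E, e.1 ≠ e.2
  antisymm : ∀ i u : Fin N, (i, u) ∈ E → (u, i) ∉ E
  acyclic : ∃ rank : Fin N → ℕ, ∀ e ∈ E, rank e.1 < rank e.2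
  connected : (SimpleGraph.fromRel fun i u => (i, u) ∈ E).Connected
  b : Fin N → EReal
  b_pos : ∀ i, 0 < b i
  lam : Fin N → ℝ
  lam_nonneg : ∀ i, 0 ≤ lam i
  g : Fin N → Fin N → ℝ → ℝ → ℝ
  gT : Fin N → ℝ → ℝ
  g_contDiff : ∀ e ∈ E, ContDiff ℝ 1 (fun x : ℝ × ℝ => g e.1 e.2 x.1 x.2)
  gT_contDiff : ∀ i, ContDiff ℝ 1 (gT i)

namespace SingleCommoditySystem

variable {N : ℕ} (S : SingleCommoditySystem N)

/-- The feasible set `Q = Π_i [0, b i]`. -/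
def Feasible (q : Fin N → ℝ) : Prop := ∀ i, 0 ≤ q i ∧ (q i : EReal) ≤ S.b i

/-- The dynamics
`f i (q) = lam i + Σ_{k:(k,i)∈E} g k i (q k) (q i) − Σ_{j:(i,j)∈E} g i j (q i) (q j) − gT i (q i)`. -/
noncomputable def f (q : Fin N → ℝ) (i : Fin N) : ℝ :=
  S.lam i + ∑ k ∈ Finset.univ.filter fun k => (k, i) ∈ S.E, S.g k i (q k) (q i)
    - ∑ j ∈ Finset.univ.filter fun j => (i, j) ∈ S.E, S.g i j (q i) (q j)
    - S.gT i (q i)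

/-- Condition (3) at a point `q`: `∂g_{ij}/∂q_i > 0` and `∂g_{ij}/∂q_j < 0`
for every edge `(i,j) ∈ E`, `gT i ' (q i) ≥ 0` for every vertex `i`, and
`gT i ' (q i) > 0` for at least one vertex `i`. -/
def Cond3 (q : Fin N → ℝ) : Prop :=
  (∀ e ∈ S.E, 0 < deriv (fun x => S.g e.1 e.2 x (q e.2)) (q e.1) ∧
      deriv (fun y => S.g e.1 e.2 (q e.1) y) (q e.2) < 0) ∧
  (∀ i, 0 ≤ deriv (S.gT i) (q i)) ∧ (∃ i, 0 < deriv (S.gT i) (q i))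

/-- The Jacobian matrix `Df(q)`, with `(i,u)` entry the partial derivative
`∂f_i/∂q_u` at `q`. -/
noncomputable def jacobian (q : Fin N → ℝ) : Matrix (Fin N) (Fin N) ℝ :=
  fun i u => deriv (fun x => S.f (Function.update q u x) i) (q u)

end SingleCommoditySystem

/-!
Under Condition (3) the transposed Jacobian at a feasible point is a Metzler matrix whose row
sums `-gT i '` are nonpositive, at least one of them negative, and whose entries along the edges
of the connected underlying graph are positive. For such a matrix, a Gershgorin bound at a
coordinate of maximal modulus of an eigenvector is tight only if that row sum vanishes and all
neighbours also have maximal modulus; connectedness spreads this to every coordinate, which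
contradicts the negative row sum unless the eigenvalue has negative real part. In particular the
matrix is invertible. For equilibria `q`, `q'`, the averaged Jacobian
`∫₀¹ Df(q' + t • (q - q')) dt` sends `q - q'` to `f q - f q' = 0`; since `Q` is convex, this
average has the same sign structure, hence is invertible, and `q = q'`.
-/

open Finset

namespace Matrix

variable {n : Type*} [Fintype n]

structure IsIrreducibleDominantMetzler (G : SimpleGraph n) (A : Matrix n n ℝ) : Prop where
  connected : G.Connected
  nonneg_of_ne : ∀ ⦃i j⦄, i ≠ j → 0 ≤ A i j
  pos_of_adj : ∀ ⦃i j⦄, G.Adj i j → 0 < A i j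
  rowSum_nonpos : ∀ i, ∑ j, A i j ≤ 0
  exists_rowSum_neg : ∃ i, ∑ j, A i j < 0

lemma re_mul_norm_le_sum_mul_norm {A : Matrix n n ℝ} (hA : ∀ ⦃i j⦄, i ≠ j → 0 ≤ A i j)
    {z : ℂ} {v : n → ℂ} (hv : A.map (↑) *ᵥ v = z • v) (i : n) :
    z.re * ‖v i‖ ≤ ∑ j, A i j * ‖v j‖ := by
  classical
  have hrow : (z - A i i) * v i = ∑ j ∈ univ.erase i, (A i j : ℂ) * v j := by
    have := congrFun hv i
    simp only [mulVec, dotProduct, map_apply, Pi.smul_apply, smul_eq_mul] at this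
    rw [← add_sum_erase _ _ (mem_univ i)] at this
    linear_combination -this
  have hle : (z.re - A i i) * ‖v i‖ ≤ ∑ j ∈ univ.erase i, A i j * ‖v j‖ :=
    calc (z.re - A i i) * ‖v i‖ ≤ ‖z - A i i‖ * ‖v i‖ := by
          gcongr
          simpa using Complex.re_le_norm (z - A i i)
      _ = ‖∑ j ∈ univ.erase i, (A i j : ℂ) * v j‖ := by rw [← norm_mul, hrow]
      _ ≤ ∑ j ∈ univ.erase i, A i j * ‖v j‖ := by
          refine (norm_sum_le _ _).trans_eq (sum_congr rfl fun j hj => ?_)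
          rw [norm_mul, Complex.norm_real, Real.norm_of_nonneg (hA (ne_of_mem_erase hj).symm)]
  rw [← add_sum_erase _ _ (mem_univ i)]
  linarith

namespace IsIrreducibleDominantMetzler

variable {G : SimpleGraph n} {A : Matrix n n ℝ}

theorem re_lt_zero_of_mulVec_eq_smul (hA : A.IsIrreducibleDominantMetzler G) {z : ℂ}
    {v : n → ℂ} (hv0 : v ≠ 0) (hv : A.map (↑) *ᵥ v = z • v) : z.re < 0 := by
  by_contra! hz
  obtain ⟨i₀, hi₀⟩ := Function.ne_iff.mp hv0
  obtain ⟨iM, -, hmax⟩ := exists_max_image univ (fun i => ‖v i‖) ⟨i₀, mem_univ i₀⟩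
  set m := ‖v iM‖
  have hm : 0 < m := (norm_pos_iff.mpr hi₀).trans_le (hmax i₀ (mem_univ i₀))
  have hrow : ∀ i, ‖v i‖ = m → ∑ j, A i j = 0 ∧ ∀ j, 0 < A i j → ‖v j‖ = m := by
    intro i hi
    have hterm : ∀ j ∈ univ, A i j * (‖v j‖ - m) ≤ 0 := fun j _ => by
      rcases eq_or_ne i j with rfl | hij
      · simp [hi]
      · exact mul_nonpos_of_nonneg_of_nonpos (hA.nonneg_of_ne hij)
          (sub_nonpos.mpr (hmax j (mem_univ j)))
    have hsplit : ∑ j, A i j * ‖v j‖ = (∑ j, A i j) * m + ∑ j, A i j * (‖v j‖ - m) := by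
      simp only [mul_sub, sum_sub_distrib, sum_mul]
      ring
    have hgersh := re_mul_norm_le_sum_mul_norm hA.nonneg_of_ne hv i
    have hrow_nonpos := mul_nonpos_of_nonpos_of_nonneg (hA.rowSum_nonpos i) hm.le
    have hdev := sum_nonpos hterm
    have hzm : 0 ≤ z.re * ‖v i‖ := mul_nonneg hz (norm_nonneg _)
    refine ⟨?_, fun j hj => ?_⟩
    · have h0 : (∑ j, A i j) * m = 0 := by linarith
      exact (mul_eq_zero.mp h0).resolve_right hm.ne'
    · have hdev0 : ∑ j, A i j * (‖v j‖ - m) = 0 := by linarith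
      have := (sum_eq_zero_iff_of_nonpos hterm).mp hdev0 j (mem_univ j)
      linarith [(mul_eq_zero.mp this).resolve_left hj.ne']
  have hall : ∀ j, ‖v j‖ = m := fun j => by
    induction (SimpleGraph.reachable_iff_reflTransGen _ _).mp
      (hA.connected.preconnected iM j) with
    | refl => rfl
    | tail _ hadj ih => exact (hrow _ ih).2 _ (hA.pos_of_adj hadj)
  obtain ⟨i, hi⟩ := hA.exists_rowSum_neg
  exact hi.ne (hrow i (hall i)).1

theorem re_lt_zero_of_isRoot_charpoly [DecidableEq n] (hA : A.IsIrreducibleDominantMetzler G)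
    {z : ℂ} (hz : (A.map ((↑) : ℝ → ℂ)).charpoly.IsRoot z) : z.re < 0 := by
  rw [Polynomial.IsRoot.def, eval_charpoly, ← exists_mulVec_eq_zero_iff] at hz
  obtain ⟨v, hv0, hv⟩ := hz
  refine hA.re_lt_zero_of_mulVec_eq_smul hv0 ?_
  rw [sub_mulVec, sub_eq_zero] at hv
  ext i
  simp [← hv, mulVec_diagonal]

theorem det_ne_zero [DecidableEq n] (hA : A.IsIrreducibleDominantMetzler G) : A.det ≠ 0 := by
  rw [Ne, ← exists_mulVec_eq_zero_iff]
  rintro ⟨v, hv0, hv⟩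
  have hvC : A.map (↑) *ᵥ (fun i => (v i : ℂ)) = (0 : ℂ) • fun i => (v i : ℂ) := by
    ext i
    simpa [mulVec, dotProduct] using congrArg ((↑) : ℝ → ℂ) (congrFun hv i)
  have := hA.re_lt_zero_of_mulVec_eq_smul (fun h => hv0 (funext fun i => by
    simpa using congrFun h i)) hvC
  simp at this

open intervalIntegral in
theorem intervalIntegral {A : ℝ → Matrix n n ℝ} {a b : ℝ} (hab : a < b)
    (hcont : ∀ i j, Continuous fun t => A t i j)
    (hA : ∀ t ∈ Set.Icc a b, (A t).IsIrreducibleDominantMetzler G) :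
    (of fun i j => ∫ t in a..b, A t i j).IsIrreducibleDominantMetzler G := by
  have hAa := hA a (Set.left_mem_Icc.mpr hab.le)
  have hrowSum : ∀ i, ∑ j, (∫ t in a..b, A t i j) = ∫ t in a..b, ∑ j, A t i j := fun i =>
    (integral_finsetSum fun j _ => (hcont i j).intervalIntegrable a b).symm
  refine ⟨hAa.connected, fun i j hij => ?_, fun i j hadj => ?_, fun i => ?_, ?_⟩
  · exact integral_nonneg hab.le fun t ht => (hA t ht).nonneg_of_ne hij
  · exact intervalIntegral_pos_of_pos_on ((hcont i j).intervalIntegrable a b)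
      (fun t ht => (hA t (Set.Ioo_subset_Icc_self ht)).pos_of_adj hadj) hab
  · simp only [of_apply]
    rw [hrowSum, ← neg_nonneg, ← integral_neg]
    exact integral_nonneg hab.le fun t ht => neg_nonneg.mpr ((hA t ht).rowSum_nonpos i)
  · obtain ⟨i, hi⟩ := hAa.exists_rowSum_neg
    refine ⟨i, ?_⟩
    simp only [of_apply]
    rw [hrowSum, ← neg_pos, ← integral_neg]
    refine integral_pos hab (Continuous.continuousOn (by fun_prop))
      (fun t ht => neg_nonneg.mpr ((hA t (Set.Ioc_subset_Icc_self ht)).rowSum_nonpos i))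
      ⟨a, Set.left_mem_Icc.mpr hab.le, by simpa using hi⟩

end IsIrreducibleDominantMetzler
end Matrix

theorem hasDerivAt_comp_update_apply {ι : Type*} [Fintype ι] [DecidableEq ι] {φ : ℝ → ℝ}
    (q : ι → ℝ) (u k : ι) (hφ : DifferentiableAt ℝ φ (q k)) :
    HasDerivAt (fun x => φ (Function.update q u x k))
      (deriv φ (q k) * (Pi.single u 1 : ι → ℝ) k) (q u) := by
  have hφ' : HasDerivAt φ (deriv φ (q k)) (Function.update q u (q u) k) := by
    rw [Function.update_eq_self]
    exact hφ.hasDerivAt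
  exact hφ'.comp (q u) (hasDerivAt_pi.mp (hasDerivAt_update q u (q u)) k)

namespace SingleCommoditySystem

open Finset Function Matrix

variable {N : ℕ} (S : SingleCommoditySystem N)

theorem convex_setOf_feasible : Convex ℝ {q | S.Feasible q} := by
  have hconv : ∀ i, Convex ℝ {x : ℝ | 0 ≤ x ∧ (x : EReal) ≤ S.b i} := fun i =>
    Set.OrdConnected.convex ⟨fun _ hx _ hy _ hz =>
      ⟨hx.1.trans hz.1, (EReal.coe_le_coe_iff.mpr hz.2).trans hy.2⟩⟩
  simpa [Set.pi, Feasible] using convex_pi (s := Set.univ) fun i _ => hconv i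

theorem sum_f (q : Fin N → ℝ) : ∑ i, S.f q i = ∑ i, (S.lam i - S.gT i (q i)) := by
  have hflow : ∑ i, ∑ k ∈ univ.filter fun k => (k, i) ∈ S.E, S.g k i (q k) (q i)
      = ∑ i, ∑ j ∈ univ.filter fun j => (i, j) ∈ S.E, S.g i j (q i) (q j) := by
    simp only [sum_filter]
    exact sum_comm
  simp only [f, sum_sub_distrib, sum_add_distrib, hflow]
  ring

theorem contDiff_f (i : Fin N) : ContDiff ℝ 1 fun q : Fin N → ℝ => S.f q i := by
  unfold f
  refine ((contDiff_const.add (ContDiff.sum fun k hk => ?_)).sub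
    (ContDiff.sum fun j hj => ?_)).sub ((S.gT_contDiff i).comp (contDiff_apply ℝ ℝ i))
  · exact (S.g_contDiff (k, i) (mem_filter.mp hk).2).comp
      ((contDiff_apply ℝ ℝ k).prodMk (contDiff_apply ℝ ℝ i))
  · exact (S.g_contDiff (i, j) (mem_filter.mp hj).2).comp
      ((contDiff_apply ℝ ℝ i).prodMk (contDiff_apply ℝ ℝ j))

theorem hasDerivAt_f_update (q : Fin N → ℝ) (i u : Fin N) :
    HasDerivAt (fun x => S.f (update q u x) i) (S.jacobian q i u) (q u) := by
  have hdiff : DifferentiableAt ℝ (fun x => S.f (update q u x) i) (q u) :=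
    ((S.contDiff_f i).differentiable one_ne_zero _).comp _
      (hasDerivAt_update q u (q u)).differentiableAt
  exact hdiff.hasDerivAt

theorem jacobian_eq_fderiv (q : Fin N → ℝ) (i u : Fin N) :
    S.jacobian q i u = fderiv ℝ (fun p => S.f p i) q (Pi.single u 1) := by
  have hF : HasFDerivAt (fun p => S.f p i) (fderiv ℝ (fun p => S.f p i) q)
      (update q u (q u)) := by
    rw [update_eq_self]
    exact ((S.contDiff_f i).differentiable one_ne_zero q).hasFDerivAt
  exact (hF.comp_hasDerivAt (q u) (hasDerivAt_update q u (q u))).deriv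

theorem fderiv_f_apply (q Δ : Fin N → ℝ) (i : Fin N) :
    fderiv ℝ (fun p => S.f p i) q Δ = (S.jacobian q *ᵥ Δ) i := by
  rw [congrArg (fderiv ℝ (fun p => S.f p i) q) (pi_eq_sum_univ' Δ)]
  simp [mulVec, dotProduct, S.jacobian_eq_fderiv, mul_comm]

theorem continuous_jacobian (i u : Fin N) : Continuous fun q => S.jacobian q i u := by
  simp only [S.jacobian_eq_fderiv]
  exact ((S.contDiff_f i).continuous_fderiv one_ne_zero).clm_apply continuous_const

theorem hasDerivAt_f_add_smul (q Δ : Fin N → ℝ) (i : Fin N) (t : ℝ) :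
    HasDerivAt (fun s => S.f (q + s • Δ) i) ((S.jacobian (q + t • Δ) *ᵥ Δ) i) t := by
  have hF := ((S.contDiff_f i).differentiable one_ne_zero (q + t • Δ)).hasFDerivAt
  have hline : HasDerivAt (fun s : ℝ => q + s • Δ) Δ t := by
    simpa using ((hasDerivAt_id t).smul_const Δ).const_add q
  rw [← S.fderiv_f_apply]
  exact hF.comp_hasDerivAt t hline

theorem intervalIntegral_jacobian_mulVec (q q' : Fin N → ℝ) :
    of (fun i u => ∫ t in (0 : ℝ)..1, S.jacobian (q' + t • (q - q')) i u) *ᵥ (q - q')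
      = S.f q - S.f q' := by
  ext i
  have hcont : ∀ u, Continuous fun t : ℝ => S.jacobian (q' + t • (q - q')) i u := fun u =>
    (S.continuous_jacobian i u).comp (by fun_prop)
  have hint : Continuous fun t : ℝ => (S.jacobian (q' + t • (q - q')) *ᵥ (q - q')) i := by
    simp only [mulVec, dotProduct]
    exact continuous_finsetSum univ fun u _ => (hcont u).mul continuous_const
  have hFTC := intervalIntegral.integral_eq_sub_of_hasDerivAt
    (fun t _ => S.hasDerivAt_f_add_smul q' (q - q') i t) (hint.intervalIntegrable 0 1)
  simp only [zero_smul, add_zero, one_smul, add_sub_cancel] at hFTC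
  rw [Pi.sub_apply, ← hFTC]
  simp only [mulVec, dotProduct, of_apply, ← intervalIntegral.integral_mul_const]
  exact (intervalIntegral.integral_finsetSum fun u _ =>
    ((hcont u).mul continuous_const).intervalIntegrable 0 1).symm

theorem differentiable_g_left {k i : Fin N} (he : (k, i) ∈ S.E) (c : ℝ) :
    Differentiable ℝ fun x => S.g k i x c :=
  ((S.g_contDiff (k, i) he).comp (contDiff_id.prodMk contDiff_const)).differentiable one_ne_zero

theorem differentiable_g_right {k i : Fin N} (he : (k, i) ∈ S.E) (c : ℝ) :
    Differentiable ℝ fun y => S.g k i c y :=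
  ((S.g_contDiff (k, i) he).comp (contDiff_const.prodMk contDiff_id)).differentiable one_ne_zero

theorem sum_jacobian_col (q : Fin N → ℝ) (u : Fin N) :
    ∑ i, S.jacobian q i u = -deriv (S.gT u) (q u) := by
  have hf : HasDerivAt (fun x => ∑ i, S.f (update q u x) i) (∑ i, S.jacobian q i u) (q u) :=
    HasDerivAt.fun_sum fun i _ => S.hasDerivAt_f_update q i u
  have hbal : HasDerivAt (fun x => ∑ i, (S.lam i - S.gT i (update q u x i)))
      (∑ i, (0 - deriv (S.gT i) (q i) * (Pi.single u 1 : Fin N → ℝ) i)) (q u) :=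
    HasDerivAt.fun_sum fun i _ => (hasDerivAt_const _ _).sub
      (hasDerivAt_comp_update_apply q u i ((S.gT_contDiff i).differentiable one_ne_zero _))
  simp only [S.sum_f] at hf
  simp [hf.unique hbal, Pi.single_apply]

theorem jacobian_of_ne (q : Fin N → ℝ) {i u : Fin N} (hiu : i ≠ u) :
    S.jacobian q i u =
      (if (u, i) ∈ S.E then deriv (fun x => S.g u i x (q i)) (q u) else 0)
      - (if (i, u) ∈ S.E then deriv (fun y => S.g i u (q i) y) (q u) else 0) := by
  have hfun : (fun x => S.f (update q u x) i) = fun x => S.lam i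
      + ∑ k ∈ univ.filter fun k => (k, i) ∈ S.E, S.g k i (update q u x k) (q i)
      - ∑ j ∈ univ.filter fun j => (i, j) ∈ S.E, S.g i j (q i) (update q u x j)
      - S.gT i (q i) := by
    funext x
    simp only [f, update_of_ne hiu]
  have hderiv : HasDerivAt (fun x => S.f (update q u x) i)
      (∑ k ∈ univ.filter fun k => (k, i) ∈ S.E,
          deriv (fun x => S.g k i x (q i)) (q k) * (Pi.single u 1 : Fin N → ℝ) k
        - ∑ j ∈ univ.filter fun j => (i, j) ∈ S.E,
          deriv (fun y => S.g i j (q i) y) (q j) * (Pi.single u 1 : Fin N → ℝ) j) (q u) := by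
    rw [hfun]
    refine (((HasDerivAt.fun_sum fun k hk => ?_).const_add (S.lam i)).sub
      (HasDerivAt.fun_sum fun j hj => ?_)).sub_const (S.gT i (q i))
    · exact hasDerivAt_comp_update_apply q u k
        (S.differentiable_g_left (mem_filter.mp hk).2 (q i) (q k))
    · exact hasDerivAt_comp_update_apply q u j
        (S.differentiable_g_right (mem_filter.mp hj).2 (q i) (q j))
  rw [(S.hasDerivAt_f_update q i u).unique hderiv]
  simp [Pi.single_apply]

variable {S}

theorem Cond3.isIrreducibleDominantMetzler_jacobian_transpose {q : Fin N → ℝ}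
    (hq : S.Cond3 q) :
    (S.jacobian q)ᵀ.IsIrreducibleDominantMetzler
      (SimpleGraph.fromRel fun i u => (i, u) ∈ S.E) := by
  refine ⟨S.connected, fun i j hij => ?_, fun i j hadj => ?_, fun i => ?_, ?_⟩
  · rw [transpose_apply, S.jacobian_of_ne q hij.symm]
    have hin : 0 ≤ if (i, j) ∈ S.E then deriv (fun x => S.g i j x (q j)) (q i) else 0 := by
      split_ifs with h
      exacts [(hq.1 _ h).1.le, le_rfl]
    have hout : (if (j, i) ∈ S.E then deriv (fun y => S.g j i (q j) y) (q i) else 0) ≤ 0 := by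
      split_ifs with h
      exacts [(hq.1 _ h).2.le, le_rfl]
    linarith
  · obtain ⟨hij, hin | hout⟩ := (SimpleGraph.fromRel_adj _ _ _).mp hadj
    · rw [transpose_apply, S.jacobian_of_ne q hij.symm, if_pos hin,
        if_neg (S.antisymm _ _ hin)]
      simpa using (hq.1 _ hin).1
    · rw [transpose_apply, S.jacobian_of_ne q hij.symm, if_neg (S.antisymm _ _ hout),
        if_pos hout]
      simpa using (hq.1 _ hout).2
  · simp only [transpose_apply, S.sum_jacobian_col]
    linarith [hq.2.1 i]
  · obtain ⟨i, hi⟩ := hq.2.2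
    exact ⟨i, by simpa [S.sum_jacobian_col] using hi⟩

end SingleCommoditySystem

open Matrix in
/-- **Theorem 2.** If Condition (3) holds at every feasible point, then the
system has at most one equilibrium point in `Q`, and at any equilibrium point
`q* ∈ Q` every eigenvalue of the Jacobian `Df(q*)` has strictly negative real
part. -/
theorem stmt1 {N : ℕ} (S : SingleCommoditySystem N)
    (h3 : ∀ q, S.Feasible q → S.Cond3 q) :
    (∀ q q', S.Feasible q → S.Feasible q' →
      (∀ i, S.f q i = 0) → (∀ i, S.f q' i = 0) → q = q') ∧
    (∀ q, S.Feasible q → (∀ i, S.f q i = 0) →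
      ∀ z : ℂ, ((S.jacobian q).map (fun x : ℝ => (x : ℂ))).charpoly.IsRoot z →
        z.re < 0) := by
  refine ⟨fun q q' hq hq' hfq hfq' => ?_, fun q hq _ z hz => ?_⟩
  · by_contra hne
    have hB := IsIrreducibleDominantMetzler.intervalIntegral zero_lt_one
      (fun i j => (S.continuous_jacobian j i).comp (by fun_prop)) fun t ht =>
        (h3 _ (S.convex_setOf_feasible.add_smul_sub_mem hq' hq ht)
          ).isIrreducibleDominantMetzler_jacobian_transpose
    have hdet := exists_mulVec_eq_zero_iff.mp ⟨q - q', sub_ne_zero.mpr hne, by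
      rw [S.intervalIntegral_jacobian_mulVec]
      ext i
      simp [hfq, hfq']⟩
    exact hB.det_ne_zero (by rwa [← det_transpose] at hdet)
  · rw [← charpoly_transpose, ← transpose_map] at hz
    exact (h3 q hq).isIrreducibleDominantMetzler_jacobian_transpose
      |>.re_lt_zero_of_isRoot_charpoly hz
end

section
/- Suppose Condition (3) holds at every feasible point q ∈ Q, and suppose there exist finite reals b̲_i ≤ b̄_i with [b̲_i, b̄_i] ⊆ [0, b_i] for every vertex i such that, writing B̄ = Π_i [b̲_i, b̄_i]: for every i and every q ∈ B̄ with q_i = b̄_i one has f_i(q) ≤ 0, and for every q ∈ B̄ with q_i = b̲_i one has f_i(q) ≥ 0. Then the system has exactly one equilibrium point in Q; it lies in B̄, and every eigenvalue of the Jacobian Df at this equilibrium has strictly negative real part. (This is the paper's Theorem 3.) -/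
/-!
The points of the box at which every `f i` is nonnegative form a closed set containing `bl`, and
Condition (3) makes `f i` nondecreasing in the coordinates `q j`, `j ≠ i`, so this set is closed
under `⊔`. Its supremum is an equilibrium: a coordinate with `f i > 0` could still be raised.

Uniqueness and stability both reduce to one linear fact. By the mean value theorem, the
difference of `f` at two feasible points, like the Jacobian, has the form
`d ↦ (net inflow of the edge flows a e * d e.1 + c e * d e.2) - t * d` with `a > 0 > c` on the
edges, `t ≥ 0` and some `t i > 0`. Such an operator is injective: summing it over the set where
`d > 0` shows that no edge crosses the boundary of that set, so by connectedness the set is empty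
or everything, and `t` excludes the latter. The Jacobian is moreover Metzler with nonpositive
column sums, so Gershgorin's discs for its columns meet the closed right half-plane only at `0`,
which is not an eigenvalue.
-/

open Finset Filter Topology

section NetworkFlow

lemma mem_of_forall_mem_iff_mem {V : Type*} {E : Finset (V × V)}
    (hconn : (SimpleGraph.fromRel fun i u => (i, u) ∈ E).Connected) {P : Set V}
    (hP : ∀ e ∈ E, e.1 ∈ P ↔ e.2 ∈ P) {v : V} (hv : v ∈ P) (u : V) : u ∈ P := by
  obtain ⟨walk⟩ := hconn.preconnected v u
  induction walk with
  | nil => exact hv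
  | cons hadj _ ih =>
    rw [SimpleGraph.fromRel_adj] at hadj
    exact ih <| hadj.2.elim (fun he => (hP _ he).1 hv) (fun he => (hP _ he).2 hv)

variable {V : Type*} [DecidableEq V] (E : Finset (V × V))

def netInflow (w : V × V → ℝ) (i : V) : ℝ :=
  ∑ e ∈ E with e.2 = i, w e - ∑ e ∈ E with e.1 = i, w e

variable {E}

lemma netInflow_sub_eq {w w' v : V × V → ℝ} (h : ∀ e ∈ E, w e - w' e = v e) (i : V) :
    netInflow E w i - netInflow E w' i = netInflow E v i := by
  rw [netInflow, netInflow, netInflow, sub_sub_sub_comm, ← sum_sub_distrib, ← sum_sub_distrib]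
  congr 1 <;> exact sum_congr rfl fun e he => h e (mem_filter.1 he).1

lemma sum_netInflow (P : Finset V) (w : V × V → ℝ) :
    ∑ i ∈ P, netInflow E w i
      = ∑ e ∈ E, ((if e.2 ∈ P then w e else 0) - if e.1 ∈ P then w e else 0) := by
  rw [sum_sub_distrib, ← sum_filter, ← sum_filter, ← sum_fiberwise_eq_sum_filter E P Prod.snd,
    ← sum_fiberwise_eq_sum_filter E P Prod.fst, ← sum_sub_distrib]
  rfl

lemma sum_univ_netInflow [Fintype V] (w : V × V → ℝ) : ∑ i, netInflow E w i = 0 := by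
  simp [sum_netInflow]

lemma netInflow_eq_sum_sub_sum [Fintype V] (w : V × V → ℝ) (i : V) :
    netInflow E w i = ∑ k with (k, i) ∈ E, w (k, i) - ∑ j with (i, j) ∈ E, w (i, j) := by
  rw [netInflow]
  congr 1
  · exact sum_nbij' Prod.fst (fun k => (k, i)) (by aesop) (by aesop) (by aesop) (by aesop) (by aesop)
  · exact sum_nbij' Prod.snd (fun j => (i, j)) (by aesop) (by aesop) (by aesop) (by aesop) (by aesop)

lemma hasDerivAt_netInflow {w : ℝ → V × V → ℝ} {w' : V × V → ℝ} {s : ℝ}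
    (h : ∀ e ∈ E, HasDerivAt (fun s => w s e) (w' e) s) (i : V) :
    HasDerivAt (fun s => netInflow E (w s) i) (netInflow E w' i) s :=
  (HasDerivAt.fun_sum fun e he => h e (mem_filter.1 he).1).sub
    (HasDerivAt.fun_sum fun e he => h e (mem_filter.1 he).1)

variable (E)

def networkOperator (a c : V × V → ℝ) (t : V → ℝ) : (V → ℝ) →ₗ[ℝ] V → ℝ where
  toFun d i := netInflow E (fun e => a e * d e.1 + c e * d e.2) i - t i * d i
  map_add' d d' := by
    ext i
    simp only [netInflow, Pi.add_apply, mul_add, sum_add_distrib]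
    ring
  map_smul' r d := by
    ext i
    simp only [netInflow, Pi.smul_apply, smul_eq_mul, RingHom.id_apply, mul_sub, mul_sum, mul_add,
      mul_left_comm r]

variable {E}

lemma networkOperator_apply (a c : V × V → ℝ) (t d : V → ℝ) (i : V) :
    networkOperator E a c t d i = netInflow E (fun e => a e * d e.1 + c e * d e.2) i - t i * d i :=
  rfl

lemma networkOperator_apply_nonneg {a c : V × V → ℝ} (ha : ∀ e ∈ E, 0 ≤ a e)
    (hc : ∀ e ∈ E, c e ≤ 0) (t : V → ℝ) {d : V → ℝ} (hd : 0 ≤ d) {i : V} (hdi : d i = 0) :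
    0 ≤ networkOperator E a c t d i := by
  rw [networkOperator_apply, hdi, mul_zero, sub_zero, netInflow, sub_nonneg]
  refine (sum_nonpos fun e he => ?_).trans (sum_nonneg fun e he => ?_) <;>
    obtain ⟨heE, rfl⟩ := mem_filter.1 he
  · rw [hdi, mul_zero, zero_add]
    exact mul_nonpos_of_nonpos_of_nonneg (hc e heE) (hd _)
  · rw [hdi, mul_zero, add_zero]
    exact mul_nonneg (ha e heE) (hd _)

lemma sum_networkOperator_apply [Fintype V] (a c : V × V → ℝ) (t d : V → ℝ) :
    ∑ i, networkOperator E a c t d i = -∑ i, t i * d i := by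
  simp [networkOperator_apply, sum_univ_netInflow]

lemma inflow_across_nonpos {a c : ℝ} (ha : 0 < a) (hc : c < 0) (x y : ℝ) :
    ((if 0 < y then a * x + c * y else 0) - if 0 < x then a * x + c * y else 0) ≤ 0 := by
  split_ifs <;> nlinarith

lemma inflow_across_neg {a c : ℝ} (ha : 0 < a) (hc : c < 0) {x y : ℝ} (hxy : ¬(0 < x ↔ 0 < y)) :
    ((if 0 < y then a * x + c * y else 0) - if 0 < x then a * x + c * y else 0) < 0 := by
  split_ifs <;> first | tauto | nlinarith

theorem networkOperator_nonpos_of_eq_zero [Fintype V]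
    (hconn : (SimpleGraph.fromRel fun i u => (i, u) ∈ E).Connected) {a c : V × V → ℝ}
    (ha : ∀ e ∈ E, 0 < a e) (hc : ∀ e ∈ E, c e < 0) {t : V → ℝ} (ht : ∀ i, 0 ≤ t i)
    (ht' : ∃ i, 0 < t i) {d : V → ℝ} (hd : networkOperator E a c t d = 0) : d ≤ 0 := by
  by_contra hpos
  obtain ⟨i₀, hi₀⟩ : ∃ i, 0 < d i := by simpa [Pi.le_def] using hpos
  have hbalance (P : Finset V) :
      ∑ i ∈ P, t i * d i
        = ∑ e ∈ E, ((if e.2 ∈ P then a e * d e.1 + c e * d e.2 else 0)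
            - if e.1 ∈ P then a e * d e.1 + c e * d e.2 else 0) := by
    rw [← sum_netInflow]
    refine sum_congr rfl fun i _ => ?_
    have := congrFun hd i
    rw [networkOperator_apply, Pi.zero_apply, sub_eq_zero] at this
    exact this.symm
  set P := univ.filter fun i => 0 < d i
  have hmemP (i : V) : i ∈ P ↔ 0 < d i := by simp [P]
  have hnonneg : 0 ≤ ∑ i ∈ P, t i * d i :=
    sum_nonneg fun i hi => mul_nonneg (ht i) ((hmemP i).1 hi).le
  have hcut : ∀ e ∈ E, e.1 ∈ (P : Set V) ↔ e.2 ∈ (P : Set V) := by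
    intro e he
    by_contra hcross
    refine hnonneg.not_gt ?_
    rw [hbalance]
    simp only [hmemP, mem_coe] at hcross ⊢
    exact (sum_lt_sum (fun e' he' => inflow_across_nonpos (ha e' he') (hc e' he') (d e'.1) (d e'.2))
      ⟨e, he, inflow_across_neg (ha e he) (hc e he) hcross⟩).trans_eq sum_const_zero
  have hall (i : V) : 0 < d i := (hmemP i).1 (mem_of_forall_mem_iff_mem hconn hcut
    (show i₀ ∈ (P : Set V) from (hmemP i₀).2 hi₀) i)
  obtain ⟨j, hj⟩ := ht'
  have hzero := hbalance univ
  simp only [mem_univ, if_true, sub_self, sum_const_zero] at hzero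
  have hpos : 0 < ∑ i, t i * d i :=
    sum_pos' (fun i _ => mul_nonneg (ht i) (hall i).le) ⟨j, mem_univ j, mul_pos hj (hall j)⟩
  exact hpos.ne' hzero

theorem eq_zero_of_networkOperator_eq_zero [Fintype V]
    (hconn : (SimpleGraph.fromRel fun i u => (i, u) ∈ E).Connected) {a c : V × V → ℝ}
    (ha : ∀ e ∈ E, 0 < a e) (hc : ∀ e ∈ E, c e < 0) {t : V → ℝ} (ht : ∀ i, 0 ≤ t i)
    (ht' : ∃ i, 0 < t i) {d : V → ℝ} (hd : networkOperator E a c t d = 0) : d = 0 :=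
  le_antisymm (networkOperator_nonpos_of_eq_zero hconn ha hc ht ht' hd) <| neg_nonpos.1 <|
    networkOperator_nonpos_of_eq_zero hconn ha hc ht ht' (by rw [map_neg, hd, neg_zero])

end NetworkFlow

lemma Complex.re_neg_of_norm_sub_ofReal_le {z : ℂ} {α : ℝ} (h : ‖z - α‖ ≤ -α) (hz : z ≠ 0) :
    z.re < 0 := by
  have hsq : (z.re - α) ^ 2 + z.im ^ 2 ≤ α ^ 2 := by
    have h0 : 0 ≤ ‖z - α‖ := norm_nonneg _
    have : ‖z - α‖ ^ 2 ≤ α ^ 2 := by nlinarith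
    rwa [Complex.sq_norm, Complex.normSq_apply, Complex.sub_re, Complex.sub_im,
      Complex.ofReal_re, Complex.ofReal_im, sub_zero, ← sq, ← sq] at this
  by_contra hre
  have hα : α ≤ 0 := by linarith [norm_nonneg (z - α)]
  have hre0 : z.re = 0 := by nlinarith
  have him0 : z.im = 0 := by nlinarith
  exact hz (Complex.ext hre0 him0)

theorem Matrix.re_neg_of_isRoot_charpoly_s2 {n : Type*} [Fintype n] [DecidableEq n]
    {A : Matrix n n ℝ} (hoff : ∀ i j, i ≠ j → 0 ≤ A i j) (hcol : ∀ j, ∑ i, A i j ≤ 0)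
    (hdet : A.det ≠ 0) {z : ℂ} (hz : (A.map ((↑) : ℝ → ℂ)).charpoly.IsRoot z) : z.re < 0 := by
  have heig : Module.End.HasEigenvalue (Matrix.toLin' (A.map ((↑) : ℝ → ℂ)).transpose) z := by
    rwa [Module.End.hasEigenvalue_iff_isRoot_charpoly, Matrix.charpoly_toLin',
      Matrix.charpoly_transpose]
  obtain ⟨k, hk⟩ := eigenvalue_mem_ball heig
  have hradius : ∑ j ∈ univ.erase k, ‖(A.map ((↑) : ℝ → ℂ)).transpose k j‖ ≤ -A k k := by
    have hsum := hcol k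
    rw [← add_sum_erase _ _ (mem_univ k)] at hsum
    have : ∑ j ∈ univ.erase k, ‖(A.map ((↑) : ℝ → ℂ)).transpose k j‖ = ∑ j ∈ univ.erase k, A j k :=
      sum_congr rfl fun j hj => by
        simp [Complex.norm_real, abs_of_nonneg (hoff j k (ne_of_mem_erase hj))]
    linarith
  refine Complex.re_neg_of_norm_sub_ofReal_le ((mem_closedBall_iff_norm.1 hk).trans ?_) ?_
  · simpa using hradius
  · rintro rfl
    apply hdet
    have : (A.map ((↑) : ℝ → ℂ)).det = 0 := by
      rw [Matrix.det_eq_sign_charpoly_coeff, Polynomial.coeff_zero_eq_eval_zero, hz.eq_zero,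
        mul_zero]
    exact Complex.ofReal_eq_zero.1 ((Complex.ofRealHom.map_det A).trans this)

lemma exists_mem_uIcc_sub_eq_deriv_mul {φ : ℝ → ℝ} (hφ : Differentiable ℝ φ) (a b : ℝ) :
    ∃ ξ ∈ Set.uIcc a b, φ b - φ a = deriv φ ξ * (b - a) := by
  wlog hab : a ≤ b generalizing a b
  · obtain ⟨ξ, hξ, h⟩ := this b a (le_of_not_ge hab)
    exact ⟨ξ, Set.uIcc_comm a b ▸ hξ, by linarith⟩
  rcases hab.eq_or_lt with rfl | hlt
  · exact ⟨a, Set.left_mem_uIcc, by ring⟩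
  obtain ⟨ξ, hξ, h⟩ := exists_deriv_eq_slope φ hlt hφ.continuous.continuousOn hφ.differentiableOn
  refine ⟨ξ, Set.Icc_subset_uIcc (Set.Ioo_subset_Icc_self hξ), ?_⟩
  rw [h, div_mul_cancel₀ _ (sub_ne_zero.2 hlt.ne')]

lemma hasDerivAt_comp_line {G : ℝ → ℝ → ℝ} (hG : Differentiable ℝ fun p : ℝ × ℝ => G p.1 p.2)
    (x y d₁ d₂ : ℝ) :
    HasDerivAt (fun s => G (x + s * d₁) (y + s * d₂))
      (deriv (fun x' => G x' y) x * d₁ + deriv (fun y' => G x y') y * d₂) 0 := by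
  set L := fderiv ℝ (fun p : ℝ × ℝ => G p.1 p.2) (x, y)
  have hL : HasFDerivAt (fun p : ℝ × ℝ => G p.1 p.2) L (x, y) := (hG _).hasFDerivAt
  have hfst : HasDerivAt (fun x' => G x' y) (L (1, 0)) x :=
    hL.comp_hasDerivAt (f := fun x' => (x', y)) x ((hasDerivAt_id x).prodMk (hasDerivAt_const x y))
  have hsnd : HasDerivAt (fun y' => G x y') (L (0, 1)) y :=
    hL.comp_hasDerivAt (f := fun y' => (x, y')) y ((hasDerivAt_const y x).prodMk (hasDerivAt_id y))
  have hline : HasDerivAt (fun s : ℝ => (x + s * d₁, y + s * d₂)) (d₁, d₂) 0 := by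
    simpa using (((hasDerivAt_id (0 : ℝ)).mul_const d₁).const_add x).prodMk
      (((hasDerivAt_id (0 : ℝ)).mul_const d₂).const_add y)
  have hdecomp : L (d₁, d₂) = L (1, 0) * d₁ + L (0, 1) * d₂ := by
    have : ((d₁, d₂) : ℝ × ℝ) = d₁ • (1, 0) + d₂ • (0, 1) := by simp
    rw [this, map_add, map_smul, map_smul, smul_eq_mul, smul_eq_mul, mul_comm d₁, mul_comm d₂]
  rw [hfst.deriv, hsnd.deriv, ← hdecomp]
  exact (by simpa using hL : HasFDerivAt (fun p : ℝ × ℝ => G p.1 p.2) L (x + 0 * d₁, y + 0 * d₂))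
    |>.comp_hasDerivAt (0 : ℝ) hline

theorem SupClosed.isLUB_mem_of_isClosed {α : Type*} [SemilatticeSup α] [TopologicalSpace α]
    [SupConvergenceClass α] {s : Set α} {a : α} (hs : SupClosed s) (hc : IsClosed s)
    (hne : s.Nonempty) (ha : IsLUB s a) : a ∈ s :=
  haveI := hne.to_subtype
  haveI := hs.directedOn.isDirectedOrder
  hc.mem_of_tendsto (SupConvergenceClass.tendsto_coe_atTop_isLUB a s ha)
    (Eventually.of_forall Subtype.prop)

theorem exists_zero_mem_Icc_of_cooperative {ι : Type*} [DecidableEq ι] {F : (ι → ℝ) → ι → ℝ}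
    {l u : ι → ℝ} (hlu : l ≤ u) (hF : ∀ i, Continuous fun q => F q i)
    (hmono : ∀ p ∈ Set.Icc l u, ∀ p' ∈ Set.Icc l u, p ≤ p' → ∀ i, p i = p' i → F p i ≤ F p' i)
    (hl : ∀ i, 0 ≤ F l i) (hu : ∀ i, ∀ q ∈ Set.Icc l u, q i = u i → F q i ≤ 0) :
    ∃ q ∈ Set.Icc l u, ∀ i, F q i = 0 := by
  set A := Set.Icc l u ∩ {q | ∀ i, 0 ≤ F q i}
  have hlA : l ∈ A := ⟨⟨le_rfl, hlu⟩, hl⟩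
  have hsup : SupClosed A := by
    rintro p ⟨hpI, hp⟩ p' ⟨hp'I, hp'⟩
    have hI : p ⊔ p' ∈ Set.Icc l u := ⟨le_sup_of_le_left hpI.1, sup_le hpI.2 hp'I.2⟩
    refine ⟨hI, fun i => ?_⟩
    rcases le_total (p' i) (p i) with h | h
    · exact (hp i).trans (hmono p hpI _ hI le_sup_left i (by simp [h]))
    · exact (hp' i).trans (hmono p' hp'I _ hI le_sup_right i (by simp [h]))
  have hclosed : IsClosed A := by
    refine isClosed_Icc.inter ?_
    simp only [Set.ofPred_forall]
    exact isClosed_iInter fun i => isClosed_le continuous_const (hF i)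
  have hlub : IsLUB A (sSup A) := isLUB_csSup ⟨l, hlA⟩ ⟨u, fun q hq => hq.1.2⟩
  set s := sSup A
  have hsA : s ∈ A := hsup.isLUB_mem_of_isClosed hclosed ⟨l, hlA⟩ hlub
  refine ⟨s, hsA.1, fun i => ?_⟩
  by_contra hne
  have hpos : 0 < F s i := (hsA.2 i).lt_of_ne' hne
  have hsu : s i < u i := (hsA.1.2 i).lt_of_ne fun h => (hu i s hsA.1 h).not_gt hpos
  -- raising `s i` slightly keeps `s` in `A`, contradicting maximality
  have hcont : Continuous fun x => F (Function.update s i x) i :=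
    (hF i).comp (continuous_const.update i continuous_id)
  have hnear : ∀ᶠ x in 𝓝 (s i), 0 < F (Function.update s i x) i ∧ x < u i :=
    ((hcont.tendsto (s i)).eventually (lt_mem_nhds (by simpa using hpos))).and (gt_mem_nhds hsu)
  obtain ⟨x, ⟨hxF, hxu⟩, hsx⟩ :=
    ((hnear.filter_mono nhdsWithin_le_nhds).and (self_mem_nhdsWithin (s := Set.Ioi (s i)))).exists
  set q := Function.update s i x
  have hsq : s ≤ q := fun j => by
    rcases eq_or_ne j i with rfl | h
    · simpa [q] using hsx.le
    · simp [q, h]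
  have hqI : q ∈ Set.Icc l u := ⟨hsA.1.1.trans hsq, fun j => by
    rcases eq_or_ne j i with rfl | h
    · simpa [q] using hxu.le
    · simpa [q, h] using hsA.1.2 j⟩
  have hqA : q ∈ A := ⟨hqI, fun k => by
    rcases eq_or_ne k i with rfl | h
    · exact hxF.le
    · exact (hsA.2 k).trans (hmono s hsA.1 q hqI hsq k (by simp [q, h]))⟩
  exact (hlub.1 hqA i).not_gt (by simpa [q] using hsx)

namespace SingleCommoditySystem

variable {N : ℕ} (S : SingleCommoditySystem N)

def flow (q : Fin N → ℝ) (e : Fin N × Fin N) : ℝ := S.g e.1 e.2 (q e.1) (q e.2)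

noncomputable def partialFst (q : Fin N → ℝ) (e : Fin N × Fin N) : ℝ :=
  deriv (fun x => S.g e.1 e.2 x (q e.2)) (q e.1)

noncomputable def partialSnd (q : Fin N → ℝ) (e : Fin N × Fin N) : ℝ :=
  deriv (fun y => S.g e.1 e.2 (q e.1) y) (q e.2)

noncomputable def linearization (q : Fin N → ℝ) : (Fin N → ℝ) →ₗ[ℝ] Fin N → ℝ :=
  networkOperator S.E (S.partialFst q) (S.partialSnd q) fun i => deriv (S.gT i) (q i)

lemma f_eq (q : Fin N → ℝ) (i : Fin N) :
    S.f q i = S.lam i + netInflow S.E (S.flow q) i - S.gT i (q i) := by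
  simp only [netInflow_eq_sum_sub_sum, f, flow]
  ring

lemma continuous_flow {e : Fin N × Fin N} (he : e ∈ S.E) : Continuous fun q => S.flow q e :=
  (S.g_contDiff e he).continuous.comp
    ((continuous_apply e.1).prodMk (continuous_apply e.2) :
      Continuous fun q : Fin N → ℝ => (q e.1, q e.2))

lemma continuous_f (i : Fin N) : Continuous fun q => S.f q i := by
  simp only [f_eq, netInflow]
  exact (continuous_const.add
    ((continuous_finsetSum _ fun e he => S.continuous_flow (mem_filter.1 he).1).sub
      (continuous_finsetSum _ fun e he => S.continuous_flow (mem_filter.1 he).1))).sub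
    ((S.gT_contDiff i).continuous.comp (continuous_apply i))

lemma differentiable_g {e : Fin N × Fin N} (he : e ∈ S.E) :
    Differentiable ℝ fun p : ℝ × ℝ => S.g e.1 e.2 p.1 p.2 :=
  (S.g_contDiff e he).differentiable one_ne_zero

lemma differentiable_gT (i : Fin N) : Differentiable ℝ (S.gT i) :=
  (S.gT_contDiff i).differentiable one_ne_zero

lemma feasible_of_mem_uIcc {p p' x : Fin N → ℝ} (hp : S.Feasible p) (hp' : S.Feasible p')
    (hx : ∀ i, x i ∈ Set.uIcc (p i) (p' i)) : S.Feasible x := fun i => by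
  wlog hle : p i ≤ p' i generalizing p p'
  · exact this hp' hp (fun j => Set.uIcc_comm (p j) (p' j) ▸ hx j) (le_of_not_ge hle)
  obtain ⟨hpx, hxp'⟩ := Set.uIcc_of_le hle ▸ hx i
  exact ⟨(hp i).1.trans hpx, (EReal.coe_le_coe_iff.2 hxp').trans (hp' i).2⟩

lemma feasible_update {p p' : Fin N → ℝ} (hp : S.Feasible p) (hp' : S.Feasible p') {k : Fin N}
    {x : ℝ} (hx : x ∈ Set.uIcc (p k) (p' k)) : S.Feasible (Function.update p' k x) :=
  S.feasible_of_mem_uIcc hp hp' fun j => by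
    rcases eq_or_ne j k with rfl | h
    · simpa using hx
    · simp [h]

lemma feasible_of_mem_Icc {bl bu q : Fin N → ℝ} (hsub : ∀ i, 0 ≤ bl i ∧ (bu i : EReal) ≤ S.b i)
    (hq : q ∈ Set.Icc bl bu) : S.Feasible q := fun i =>
  ⟨(hsub i).1.trans (hq.1 i), (EReal.coe_le_coe_iff.2 (hq.2 i)).trans (hsub i).2⟩

section Increments

variable {S} (h3 : ∀ q, S.Feasible q → S.Cond3 q) {p p' : Fin N → ℝ} (hp : S.Feasible p)
  (hp' : S.Feasible p')
include h3 hp hp'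

lemma exists_flow_sub_eq {e : Fin N × Fin N} (he : e ∈ S.E) :
    ∃ a c : ℝ, 0 < a ∧ c < 0 ∧
      S.flow p' e - S.flow p e = a * (p' e.1 - p e.1) + c * (p' e.2 - p e.2) := by
  have hne : e.1 ≠ e.2 := S.no_self_loops e he
  obtain ⟨ξ, hξ, hfst⟩ := exists_mem_uIcc_sub_eq_deriv_mul
    ((S.differentiable_g he).comp ((differentiable_id).prodMk (differentiable_const (p' e.2))))
    (p e.1) (p' e.1)
  obtain ⟨η, hη, hsnd⟩ := exists_mem_uIcc_sub_eq_deriv_mul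
    ((S.differentiable_g he).comp ((differentiable_const (p e.1)).prodMk differentiable_id))
    (p e.2) (p' e.2)
  have ha := ((h3 _ (S.feasible_update hp hp' hξ)).1 e he).1
  have hc := ((h3 _ (S.feasible_update hp' hp (Set.uIcc_comm (p e.2) _ ▸ hη))).1 e he).2
  simp only [Function.update_self, Function.update_of_ne hne, Function.update_of_ne hne.symm]
    at ha hc
  exact ⟨_, _, ha, hc, by simp only [flow, Function.comp_def, id] at hfst hsnd ⊢; linarith⟩

lemma exists_f_sub_eq :
    ∃ (a c : Fin N × Fin N → ℝ) (ξ : Fin N → ℝ), S.Feasible ξ ∧ (∀ e ∈ S.E, 0 < a e ∧ c e < 0) ∧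
      (fun i => S.f p' i - S.f p i)
        = networkOperator S.E a c (fun i => deriv (S.gT i) (ξ i)) (p' - p) := by
  choose! a c ha hc hflow using fun e (he : e ∈ S.E) => exists_flow_sub_eq h3 hp hp' he
  choose ξ hξ hdep using fun i => exists_mem_uIcc_sub_eq_deriv_mul (S.differentiable_gT i)
    (p i) (p' i)
  refine ⟨a, c, ξ, S.feasible_of_mem_uIcc hp hp' hξ, fun e he => ⟨ha e he, hc e he⟩, ?_⟩
  ext i
  have hin := netInflow_sub_eq (fun e he => hflow e he) i
  simp only [f_eq, networkOperator_apply, Pi.sub_apply] at hin ⊢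
  linarith [hdep i]

lemma f_le_f_of_le (hle : p ≤ p') {i : Fin N} (hi : p i = p' i) : S.f p i ≤ S.f p' i := by
  obtain ⟨a, c, ξ, -, hac, heq⟩ := exists_f_sub_eq h3 hp hp'
  have key : 0 ≤ networkOperator S.E a c (fun i => deriv (S.gT i) (ξ i)) (p' - p) i :=
    networkOperator_apply_nonneg (fun e he => (hac e he).1.le) (fun e he => (hac e he).2.le)
      _ (sub_nonneg.2 hle) (by simp [hi])
  rw [← heq] at key
  linarith

lemma eq_of_equilibrium (hf : ∀ i, S.f p i = 0) (hf' : ∀ i, S.f p' i = 0) : p' = p := by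
  obtain ⟨a, c, ξ, hξ, hac, heq⟩ := exists_f_sub_eq h3 hp hp'
  have hξ3 := h3 ξ hξ
  refine sub_eq_zero.1 <| eq_zero_of_networkOperator_eq_zero S.connected
    (fun e he => (hac e he).1) (fun e he => (hac e he).2) hξ3.2.1 hξ3.2.2 ?_
  rw [← heq]
  ext i
  simp [hf, hf']

end Increments

lemma hasDerivAt_f_line (q d : Fin N → ℝ) (i : Fin N) :
    HasDerivAt (fun s : ℝ => S.f (q + s • d) i) (S.linearization q d i) 0 := by
  simp only [f_eq, linearization, networkOperator_apply]
  refine (HasDerivAt.const_add _ (hasDerivAt_netInflow (fun e he => ?_) i)).sub ?_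
  · simpa [flow, partialFst, partialSnd] using
      hasDerivAt_comp_line (S.differentiable_g he) (q e.1) (q e.2) (d e.1) (d e.2)
  · have hline : HasDerivAt (fun s : ℝ => q i + s * d i) (d i) 0 := by
      simpa using ((hasDerivAt_id (0 : ℝ)).mul_const (d i)).const_add (q i)
    simp only [Pi.add_apply, Pi.smul_apply, smul_eq_mul]
    exact ((S.differentiable_gT i) (q i)).hasDerivAt.comp_of_eq 0 hline (by simp)

lemma jacobian_eq_toMatrix' (q : Fin N → ℝ) :
    S.jacobian q = LinearMap.toMatrix' (S.linearization q) := by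
  ext i u
  rw [LinearMap.toMatrix'_apply, jacobian]
  have hupdate (x : ℝ) : Function.update q u x = q + (x - q u) • Pi.single u 1 := by
    ext v
    rcases eq_or_ne v u with rfl | h <;> simp [*]
  have hline := S.hasDerivAt_f_line q (Pi.single u 1) i
  rw [← sub_self (q u)] at hline
  simpa only [hupdate] using (hline.comp_sub_const (q u) (q u)).deriv

section Jacobian

variable {S} {q : Fin N → ℝ} (hq : S.Cond3 q)
include hq

lemma jacobian_nonneg_of_ne {i u : Fin N} (h : i ≠ u) : 0 ≤ S.jacobian q i u := by
  rw [jacobian_eq_toMatrix', LinearMap.toMatrix'_apply]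
  exact networkOperator_apply_nonneg (fun e he => (hq.1 e he).1.le) (fun e he => (hq.1 e he).2.le)
    _ (Pi.single_nonneg.2 zero_le_one) (Pi.single_eq_of_ne h _)

lemma sum_jacobian_apply_nonpos (u : Fin N) : ∑ i, S.jacobian q i u ≤ 0 := by
  simp only [jacobian_eq_toMatrix', LinearMap.toMatrix'_apply, linearization,
    sum_networkOperator_apply, Pi.single_apply, mul_ite, mul_one, mul_zero, sum_ite_eq',
    mem_univ, if_true, neg_nonpos]
  exact hq.2.1 u

lemma det_jacobian_ne_zero : (S.jacobian q).det ≠ 0 := fun h => by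
  obtain ⟨d, hd, hJd⟩ := Matrix.exists_mulVec_eq_zero_iff.2 h
  rw [jacobian_eq_toMatrix', LinearMap.toMatrix'_mulVec] at hJd
  exact hd (eq_zero_of_networkOperator_eq_zero S.connected (fun e he => (hq.1 e he).1)
    (fun e he => (hq.1 e he).2) hq.2.1 hq.2.2 hJd)

end Jacobian

end SingleCommoditySystem

/-- **Theorem 3.** Suppose Condition (3) holds at every feasible point, and
there are finite reals `bl i ≤ bu i` with `[bl i, bu i] ⊆ [0, b i]` such that
on the box `B̄ = Π_i [bl i, bu i]` one has `f i (q) ≤ 0` whenever `q i = bu i`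
and `f i (q) ≥ 0` whenever `q i = bl i`.  Then the system has exactly one
equilibrium point in `Q`; it lies in `B̄`, and every eigenvalue of the
Jacobian there has strictly negative real part. -/
theorem stmt2 {N : ℕ} (S : SingleCommoditySystem N)
    (h3 : ∀ q, S.Feasible q → S.Cond3 q)
    (bl bu : Fin N → ℝ) (hle : ∀ i, bl i ≤ bu i)
    (hsub : ∀ i, 0 ≤ bl i ∧ (bu i : EReal) ≤ S.b i)
    (hup : ∀ i, ∀ q ∈ Set.Icc bl bu, q i = bu i → S.f q i ≤ 0)
    (hlo : ∀ i, ∀ q ∈ Set.Icc bl bu, q i = bl i → 0 ≤ S.f q i) :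
    ∃ q ∈ Set.Icc bl bu, (∀ i, S.f q i = 0) ∧
      (∀ q', S.Feasible q' → (∀ i, S.f q' i = 0) → q' = q) ∧
      (∀ z : ℂ, ((S.jacobian q).map (fun x : ℝ => (x : ℂ))).charpoly.IsRoot z →
        z.re < 0) := by
  obtain ⟨q, hqbox, hfq⟩ := exists_zero_mem_Icc_of_cooperative (F := S.f) hle S.continuous_f
    (fun p hp p' hp' hpp' i hi => SingleCommoditySystem.f_le_f_of_le h3
      (S.feasible_of_mem_Icc hsub hp) (S.feasible_of_mem_Icc hsub hp') hpp' hi)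
    (fun i => hlo i bl ⟨le_rfl, hle⟩ rfl) hup
  have hq := S.feasible_of_mem_Icc hsub hqbox
  have hq3 := h3 q hq
  refine ⟨q, hqbox, hfq, fun q' hq' hfq' =>
    SingleCommoditySystem.eq_of_equilibrium h3 hq hq' hfq hfq', fun z hz => ?_⟩
  exact Matrix.re_neg_of_isRoot_charpoly_s2
    (fun _ _ => SingleCommoditySystem.jacobian_nonneg_of_ne hq3)
    (SingleCommoditySystem.sum_jacobian_apply_nonpos hq3)
    (SingleCommoditySystem.det_jacobian_ne_zero hq3) hz
end

section
/- Consider the C-commodity single-hop shared-buffer system with positive parameters satisfying c_{iK} > μ_i for every i and c_{iK}/μ_i > c_{jK}/μ_j whenever 1 ≤ i < j ≤ C. Suppose commodity ℓ is the only overloaded commodity: λ_ℓ > μ_ℓ, and λ_p < μ_p for all p ≠ ℓ. Let β_K ∈ (0,1] be determined by the commodity-ℓ saturation balance c_{ℓK} β_K = μ_ℓ. Then for each p ≠ ℓ the commodity-p subsystem has an equilibrium — i.e., there exist α, α' ∈ [0,1] with λ_p = c_{pK} · α · β_K and λ_p = μ_p · α' — if and only if λ_p ≤ min(μ_p, μ_ℓ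 c_{pK}/c_{ℓK}). In particular: for every p < ℓ one has μ_ℓ c_{pK}/c_{ℓK} > μ_p, so an equilibrium exists for all λ_p ∈ [0, μ_p); while for every p > ℓ one has μ_ℓ c_{pK}/c_{ℓK} < μ_p, so the set of arrival rates admitting an equilibrium shrinks to [0, μ_ℓ c_{pK}/c_{ℓK}], a strict subset of [0, μ_p). (This is the paper's Theorem 6.) -/
/-!
With `βK = μ_ℓ / c_ℓ` forced by the saturation balance, an equilibrium of commodity `p` asks
for `λ_p` to lie in both `c_p βK · [0,1]` and `μ_p · [0,1]`, i.e. `λ_p ≤ min μ_p (c_p βK)`,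
where `c_p βK = μ_ℓ c_p / c_ℓ`. Comparing this bound with `μ_p` is the same as comparing
`c_p / μ_p` with `c_ℓ / μ_ℓ`, which the ordering of the ratios decides according to the
sign of `p - ℓ`.
-/

open Set

def HasEquilibrium (c μ β lam : ℝ) : Prop :=
  ∃ α α' : ℝ, α ∈ Icc (0 : ℝ) 1 ∧ α' ∈ Icc (0 : ℝ) 1 ∧
    lam = c * α * β ∧ lam = μ * α'

theorem exists_mem_Icc_zero_one_mul_eq_iff {a x : ℝ} (ha : 0 ≤ a) :
    (∃ α ∈ Icc (0 : ℝ) 1, a * α = x) ↔ x ∈ Icc 0 a := by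
  simpa using Set.ext_iff.mp (image_mul_left_Icc ha zero_le_one) x

theorem hasEquilibrium_iff {c μ β lam : ℝ} (hcβ : 0 ≤ c * β) (hμ : 0 ≤ μ)
    (hlam : 0 ≤ lam) :
    HasEquilibrium c μ β lam ↔ lam ≤ min μ (c * β) := by
  have hin : ∀ {a : ℝ}, 0 ≤ a → ((∃ α ∈ Icc (0 : ℝ) 1, a * α = lam) ↔ lam ≤ a) :=
    fun ha => by rw [exists_mem_Icc_zero_one_mul_eq_iff ha, mem_Icc, and_iff_right hlam]
  rw [le_min_iff, ← hin hμ, ← hin hcβ]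
  simp only [HasEquilibrium, mul_right_comm c _ β, eq_comm (a := lam)]
  constructor
  · rintro ⟨α, α', hα, hα', h, h'⟩
    exact ⟨⟨α', hα', h'⟩, ⟨α, hα, h⟩⟩
  · rintro ⟨⟨α', hα', h'⟩, ⟨α, hα, h⟩⟩
    exact ⟨α, α', hα, hα', h, h'⟩

theorem mul_eq_mul_div_of_mul_eq {a b β m : ℝ} (ha : a ≠ 0) (hbal : a * β = m) :
    b * β = m * b / a := by
  rw [← hbal]
  field_simp

theorem lt_mul_div_iff_div_lt_div {a b m n : ℝ} (ha : 0 < a) (hm : 0 < m) (hn : 0 < n) :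
    n < m * b / a ↔ a / m < b / n := by
  rw [lt_div_iff₀ ha, div_lt_div_iff₀ hm hn]
  constructor <;> intro h <;> linarith

theorem mul_div_lt_iff_div_lt_div {a b m n : ℝ} (ha : 0 < a) (hm : 0 < m) (hn : 0 < n) :
    m * b / a < n ↔ b / n < a / m := by
  rw [div_lt_iff₀ ha, div_lt_div_iff₀ hn hm]
  constructor <;> intro h <;> linarith

theorem Set.Icc_ssubset_Ico_right {α : Type*} [LinearOrder α] [DenselyOrdered α]
    {a b₁ b₂ : α} (hab : a ≤ b₁) (h : b₁ < b₂) : Icc a b₁ ⊂ Ico a b₂ := by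
  obtain ⟨x, hx₁, hx₂⟩ := exists_between h
  exact (ssubset_iff_of_subset (Icc_subset_Ico_right h)).2
    ⟨x, ⟨hab.trans hx₁.le, hx₂⟩, fun hx => hx₁.not_ge hx.2⟩

theorem stmt9_general {C : ℕ} (c mu lam : Fin C → ℝ) (ℓ : Fin C) (betaK : ℝ)
    (hc : ∀ i, 0 < c i) (hmu : ∀ i, 0 < mu i) (hlam : ∀ i, 0 ≤ lam i)
    (hsort : ∀ i j : Fin C, i < j → c j / mu j < c i / mu i)
    (hunder : ∀ p, p ≠ ℓ → lam p < mu p)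
    (hbal : c ℓ * betaK = mu ℓ) :
    ∀ p : Fin C, p ≠ ℓ →
      ((∃ α α' : ℝ, α ∈ Set.Icc (0 : ℝ) 1 ∧ α' ∈ Set.Icc (0 : ℝ) 1 ∧
          lam p = c p * α * betaK ∧ lam p = mu p * α') ↔
        lam p ≤ min (mu p) (mu ℓ * c p / c ℓ)) ∧
      (p < ℓ → mu p < mu ℓ * c p / c ℓ ∧
        (∃ α α' : ℝ, α ∈ Set.Icc (0 : ℝ) 1 ∧ α' ∈ Set.Icc (0 : ℝ) 1 ∧
          lam p = c p * α * betaK ∧ lam p = mu p * α')) ∧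
      (ℓ < p → mu ℓ * c p / c ℓ < mu p ∧
        Set.Icc (0 : ℝ) (mu ℓ * c p / c ℓ) ⊂ Set.Ico (0 : ℝ) (mu p)) := by
  intro p hp
  have hbound : c p * betaK = mu ℓ * c p / c ℓ := mul_eq_mul_div_of_mul_eq (hc ℓ).ne' hbal
  have hbound_nonneg : 0 ≤ mu ℓ * c p / c ℓ :=
    div_nonneg (mul_nonneg (hmu ℓ).le (hc p).le) (hc ℓ).le
  have hiff :
      HasEquilibrium (c p) (mu p) betaK (lam p) ↔ lam p ≤ min (mu p) (mu ℓ * c p / c ℓ) := by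
    rw [hasEquilibrium_iff (hbound ▸ hbound_nonneg) (hmu p).le (hlam p), hbound]
  refine ⟨hiff, fun hlt => ?_, fun hlt => ?_⟩
  · have hgt : mu p < mu ℓ * c p / c ℓ :=
      (lt_mul_div_iff_div_lt_div (hc ℓ) (hmu ℓ) (hmu p)).2 (hsort p ℓ hlt)
    exact ⟨hgt, hiff.2 (le_min (hunder p hp).le ((hunder p hp).trans hgt).le)⟩
  · have hlt' : mu ℓ * c p / c ℓ < mu p :=
      (mul_div_lt_iff_div_lt_div (hc ℓ) (hmu ℓ) (hmu p)).2 (hsort ℓ p hlt)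
    exact ⟨hlt', Set.Icc_ssubset_Ico_right hbound_nonneg hlt'⟩

/-- **Theorem 6.**  In the `C`-commodity single-hop shared-buffer system with
positive parameters satisfying `c i > μ i` for every `i` and
`c i / μ i > c j / μ j` whenever `i < j`, suppose commodity `ℓ` is the only
overloaded commodity (`λ ℓ > μ ℓ`, and `λ p < μ p` for all `p ≠ ℓ`), and let
`βK ∈ (0,1]` be determined by the commodity-`ℓ` saturation balance
`c ℓ * βK = μ ℓ`.  Then for every `p ≠ ℓ` the commodity-`p` subsystem has an
equilibrium — `∃ α, α' ∈ [0,1]` with `λ p = c p * α * βK` and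
`λ p = μ p * α'` — iff `λ p ≤ min (μ p) (μ ℓ * c p / c ℓ)`.  In particular,
for `p < ℓ` one has `μ ℓ * c p / c ℓ > μ p` (so an equilibrium exists for the
given `λ p ∈ [0, μ p)`), while for `p > ℓ` one has `μ ℓ * c p / c ℓ < μ p`
and the set of arrival rates admitting an equilibrium shrinks to
`[0, μ ℓ * c p / c ℓ]`, a strict subset of `[0, μ p)`. -/
theorem stmt9 {C : ℕ} (c mu lam : Fin C → ℝ) (ℓ : Fin C) (betaK : ℝ)
    (hc : ∀ i, 0 < c i) (hmu : ∀ i, 0 < mu i) (hlam : ∀ i, 0 ≤ lam i)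
    (hcap : ∀ i, mu i < c i)
    (hsort : ∀ i j : Fin C, i < j → c j / mu j < c i / mu i)
    (hover : mu ℓ < lam ℓ) (hunder : ∀ p, p ≠ ℓ → lam p < mu p)
    (hbetaK : betaK ∈ Set.Ioc (0 : ℝ) 1)
    (hbal : c ℓ * betaK = mu ℓ) :
    ∀ p : Fin C, p ≠ ℓ →
      ((∃ α α' : ℝ, α ∈ Set.Icc (0 : ℝ) 1 ∧ α' ∈ Set.Icc (0 : ℝ) 1 ∧
          lam p = c p * α * betaK ∧ lam p = mu p * α') ↔
        lam p ≤ min (mu p) (mu ℓ * c p / c ℓ)) ∧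
      (p < ℓ → mu p < mu ℓ * c p / c ℓ ∧
        (∃ α α' : ℝ, α ∈ Set.Icc (0 : ℝ) 1 ∧ α' ∈ Set.Icc (0 : ℝ) 1 ∧
          lam p = c p * α * betaK ∧ lam p = mu p * α')) ∧
      (ℓ < p → mu ℓ * c p / c ℓ < mu p ∧
        Set.Icc (0 : ℝ) (mu ℓ * c p / c ℓ) ⊂ Set.Ico (0 : ℝ) (mu p)) :=
  stmt9_general c mu lam ℓ betaK hc hmu hlam hsort hunder hbal
end

section
/- Let J₀ be the network Jacobian with all d_i = 0, i.e., J₀ has entries J₀_{iu} = n_{iu} if (i,u) ∈ E, J₀_{iu} = p_{ui} if (u,i) ∈ E, J₀_{iu} = 0 for all other i ≠ u, and J₀_{uu} = −Σ_{k:(k,u)∈E} n_{ku} − Σ_{j:(u,j)∈E} p_{uj}. Then there exists a vector δ ∈ ℝ^N with δ_i > 0 for every i such that J₀ δ = 0. (This is the paper's Lemma 5, proved via the Perron–Frobenius theorem.) -/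
/-- **Lemma 5.** Let `J₀ = J + diag(d)` be the network Jacobian with all
departure derivatives `d i` set to `0`.  Then there is a strictly positive
vector `δ` with `J₀ δ = 0`. -/
theorem stmt10 {N : ℕ} (G : NetworkJacobian N) :
    ∃ δ : Fin N → ℝ, (∀ i, 0 < δ i) ∧
      (G.J + Matrix.diagonal G.d).mulVec δ = 0 := by
  classical
  set K : Matrix (Fin N) (Fin N) ℝ := G.J + Matrix.diagonal G.d with hKdef
  -- diagonal entry
  have hKdiag : ∀ u, K u u =
      -(∑ k ∈ Finset.univ.filter fun k => (k, u) ∈ G.E, G.n k u)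
        - (∑ j ∈ Finset.univ.filter fun j => (u, j) ∈ G.E, G.p u j) := by
    intro u
    have : K u u = G.J u u + G.d u := by
      simp [hKdef, Matrix.add_apply, Matrix.diagonal_apply_eq]
    rw [this]
    simp [NetworkJacobian.J]
  have hKdiag_nonpos : ∀ u, K u u ≤ 0 := by
    intro u
    rw [hKdiag u]
    have h1 : 0 ≤ ∑ k ∈ Finset.univ.filter fun k => (k, u) ∈ G.E, G.n k u :=
      Finset.sum_nonneg fun k hk =>
        (G.n_pos (k, u) (Finset.mem_filter.mp hk).2).le
    have h2 : 0 ≤ ∑ j ∈ Finset.univ.filter fun j => (u, j) ∈ G.E, G.p u j :=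
      Finset.sum_nonneg fun j hj =>
        (G.p_pos (u, j) (Finset.mem_filter.mp hj).2).le
    linarith
  -- off-diagonal entries
  have hKoff : ∀ i u : Fin N, i ≠ u →
      K i u = if (i, u) ∈ G.E then G.n i u else if (u, i) ∈ G.E then G.p u i else 0 := by
    intro i u h
    simp [hKdef, Matrix.add_apply, Matrix.diagonal_apply_ne _ h, NetworkJacobian.J, h]
  have hKoff_nonneg : ∀ i u : Fin N, i ≠ u → 0 ≤ K i u := by
    intro i u h
    rw [hKoff i u h]
    split_ifs with h1 h2
    · exact (G.n_pos (i, u) h1).le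
    · exact (G.p_pos (u, i) h2).le
    · exact le_refl 0
  -- column sums are zero
  have hcol : ∀ u : Fin N, ∑ i, K i u = 0 := by
    intro u
    have hterm : ∀ i : Fin N, K i u =
        (if i = u then
            -(∑ k ∈ Finset.univ.filter fun k => (k, u) ∈ G.E, G.n k u)
              - (∑ j ∈ Finset.univ.filter fun j => (u, j) ∈ G.E, G.p u j)
          else 0)
          + ((if (i, u) ∈ G.E then G.n i u else 0)
            + (if (u, i) ∈ G.E then G.p u i else 0)) := by
      intro i
      by_cases h : i = u
      · subst h
        have h1 : (i, i) ∉ G.E := fun hm => G.no_self_loops _ hm rfl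
        simp [hKdiag i, h1]
      · rw [hKoff i u h]
        by_cases h2 : (i, u) ∈ G.E
        · simp [h, h2, G.antisymm i u h2]
        · simp [h, h2]
    rw [Finset.sum_congr rfl fun i _ => hterm i, Finset.sum_add_distrib,
      Finset.sum_add_distrib, Finset.sum_ite_eq' Finset.univ u,
      ← Finset.sum_filter, ← Finset.sum_filter]
    simp
  -- basic mulVec facts
  have hmv : ∀ (z : Fin N → ℝ) (u : Fin N), (K.mulVec z) u = ∑ i, K u i * z i := by
    intro z u
    simp [Matrix.mulVec, dotProduct]
  have hsplit : ∀ (z : Fin N → ℝ) (u : Fin N),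
      (K.mulVec z) u = K u u * z u + ∑ i ∈ Finset.univ.erase u, K u i * z i := by
    intro z u
    rw [hmv z u]
    exact (Finset.add_sum_erase Finset.univ (fun i => K u i * z i)
      (Finset.mem_univ u)).symm
  -- kernel vector exists
  have hi0 : Nonempty (Fin N) := G.connected.nonempty
  obtain ⟨i₀⟩ := hi0
  have h1ne : (1 : Fin N → ℝ) ≠ 0 := by
    intro h
    have := congrFun h i₀
    norm_num at this
  have hTone : K.transpose.mulVec 1 = 0 := by
    funext u
    have : (K.transpose.mulVec 1) u = ∑ i, K i u := by
      simp [Matrix.mulVec, dotProduct, Matrix.transpose_apply]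
    rw [this, hcol u]
    rfl
  have hdet : K.det = 0 := by
    rw [← Matrix.det_transpose]
    exact Matrix.exists_mulVec_eq_zero_iff.mp ⟨1, h1ne, hTone⟩
  obtain ⟨x0, hx0ne, hx0⟩ := Matrix.exists_mulVec_eq_zero_iff.mpr hdet
  -- key : positive part of a kernel vector is again a kernel vector
  have key : ∀ x : Fin N → ℝ, K.mulVec x = 0 →
      K.mulVec (fun i => max (x i) 0) = 0 := by
    intro x hx
    set y : Fin N → ℝ := fun i => max (x i) 0 with hy
    have hynn : ∀ i, 0 ≤ y i := fun i => le_max_right _ _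
    have hcomp_nonneg : ∀ u, 0 ≤ (K.mulVec y) u := by
      intro u
      have hxrow : K u u * x u + ∑ i ∈ Finset.univ.erase u, K u i * x i = 0 := by
        rw [← hsplit x u, hx]; rfl
      have hEy0 : 0 ≤ ∑ i ∈ Finset.univ.erase u, K u i * y i :=
        Finset.sum_nonneg fun i hi =>
          mul_nonneg (hKoff_nonneg u i (Ne.symm (Finset.ne_of_mem_erase hi))) (hynn i)
      have hExy : ∑ i ∈ Finset.univ.erase u, K u i * x i ≤
          ∑ i ∈ Finset.univ.erase u, K u i * y i :=
        Finset.sum_le_sum fun i hi =>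
          mul_le_mul_of_nonneg_left (le_max_left _ _)
            (hKoff_nonneg u i (Ne.symm (Finset.ne_of_mem_erase hi)))
      rw [hsplit y u]
      by_cases hxu : 0 ≤ x u
      · have hyu : y u = x u := max_eq_left hxu
        rw [hyu]; linarith
      · have hyu : y u = 0 := max_eq_right (le_of_not_ge hxu)
        rw [hyu]; simpa using hEy0
    have htot : ∑ u, (K.mulVec y) u = 0 := by
      rw [Finset.sum_congr rfl fun u _ => hmv y u, Finset.sum_comm]
      refine Finset.sum_eq_zero fun i _ => ?_
      rw [← Finset.sum_mul, hcol i, zero_mul]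
    funext u
    exact (Finset.sum_eq_zero_iff_of_nonneg fun v _ => hcomp_nonneg v).mp htot u
      (Finset.mem_univ u)
  -- get a nonneg nonzero kernel vector
  obtain ⟨j, hj⟩ : ∃ j, x0 j ≠ 0 := by
    by_contra h
    push_neg at h
    exact hx0ne (funext h)
  have hfin : ∃ y : Fin N → ℝ, K.mulVec y = 0 ∧ (∀ i, 0 ≤ y i) ∧ ∃ j, 0 < y j := by
    rcases hj.lt_or_gt with hneg | hpos
    · have hx0' : K.mulVec (-x0) = 0 := by
        rw [Matrix.mulVec_neg, hx0, neg_zero]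
      refine ⟨fun i => max (-x0 i) 0, ?_, fun i => le_max_right _ _, j, ?_⟩
      · simpa using key (-x0) hx0'
      · exact lt_max_of_lt_left (by linarith)
    · exact ⟨fun i => max (x0 i) 0, key x0 hx0, fun i => le_max_right _ _, j,
        lt_max_of_lt_left hpos⟩
  obtain ⟨y, hy0, hynn, j, hyj⟩ := hfin
  -- step along edges
  have hstep : ∀ a b : Fin N, ((a, b) ∈ G.E ∨ (b, a) ∈ G.E) → 0 < y b → 0 < y a := by
    intro a b hab hb
    by_contra hya
    have hya0 : y a = 0 := le_antisymm (not_lt.mp hya) (hynn a)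
    have hane : a ≠ b := by
      rcases hab with h | h
      · exact G.no_self_loops _ h
      · exact (G.no_self_loops _ h).symm
    have hKab : 0 < K a b := by
      rw [hKoff a b hane]
      rcases hab with h | h
      · simpa [h] using G.n_pos (a, b) h
      · have hnot : (a, b) ∉ G.E := fun h' => G.antisymm b a h h'
        simpa [hnot, h] using G.p_pos (b, a) h
    have hrowa : K a a * y a + ∑ i ∈ Finset.univ.erase a, K a i * y i = 0 := by
      rw [← hsplit y a, hy0]; rfl
    have hE0 : ∑ i ∈ Finset.univ.erase a, K a i * y i = 0 := by
      rw [hya0] at hrowa; linarith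
    have hterm0 := (Finset.sum_eq_zero_iff_of_nonneg fun i hi =>
        mul_nonneg (hKoff_nonneg a i (Ne.symm (Finset.ne_of_mem_erase hi))) (hynn i)).mp
      hE0 b (Finset.mem_erase.mpr ⟨hane.symm, Finset.mem_univ b⟩)
    exact absurd hterm0 (ne_of_gt (mul_pos hKab hb))
  -- connectivity gives positivity everywhere
  have hpos : ∀ a : Fin N, 0 < y a := by
    have hwalk : ∀ (a b : Fin N)
        (w : (SimpleGraph.fromRel fun i u => (i, u) ∈ G.E).Walk a b), 0 < y b → 0 < y a := by
      intro a b w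
      induction w with
      | nil => exact id
      | cons h p ih =>
        intro hb
        exact hstep _ _ ((SimpleGraph.fromRel_adj _ _ _).mp h).2 (ih hb)
    intro a
    obtain ⟨w⟩ := G.connected.preconnected a j
    exact hwalk a j w hyj
  exact ⟨y, hpos, hy0⟩
end

section
/- Let J₀ be the network Jacobian with all d_i = 0 (entries J₀_{iu} = n_{iu} if (i,u) ∈ E, J₀_{iu} = p_{ui} if (u,i) ∈ E, J₀_{iu} = 0 for other i ≠ u, and J₀_{uu} = −Σ_{k:(k,u)∈E} n_{ku} − Σ_{j:(u,j)∈E} p_{uj}). Then J₀ has no nonzero purely imaginary eigenvalue: every root λ ∈ ℂ of the characteristic polynomial of J₀ with Re(λ) = 0 satisfies λ = 0. (This is Step 2 in the paper's proof of Lemma 5.) -/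
/-!
`J₀` is a compartmental matrix: its off-diagonal entries are nonnegative and each column sums
to zero, since every edge rate `n i u` or `p u i` placed off the diagonal of column `u` also
appears, negated, in the diagonal entry `J₀ u u`. By Gershgorin's theorem applied to the
columns, every eigenvalue lies in a disc centred at `J₀ u u ≤ 0` whose radius is `-J₀ u u`;
such a disc touches the imaginary axis only at `0`.
-/

open Finset Matrix

theorem Complex.eq_zero_of_re_eq_zero_of_norm_sub_ofReal_le {z : ℂ} {a : ℝ} (hre : z.re = 0)
    (h : ‖z - a‖ ≤ -a) : z = 0 := by
  have hsq : ‖z - a‖ ^ 2 = a ^ 2 + z.im ^ 2 := by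
    rw [Complex.sq_norm, Complex.normSq_apply]
    simp only [Complex.sub_re, Complex.sub_im, Complex.ofReal_re, Complex.ofReal_im, hre]
    ring
  have him : z.im = 0 := by nlinarith [norm_nonneg (z - a)]
  exact Complex.ext hre him

theorem exists_norm_sub_diag_le_sum_col {K ι : Type*} [NormedField K] [Fintype ι]
    [DecidableEq ι] {A : Matrix ι ι K} {μ : K} (hμ : A.charpoly.IsRoot μ) :
    ∃ k, ‖μ - A k k‖ ≤ ∑ i ∈ univ.erase k, ‖A i k‖ := by
  rw [← charpoly_transpose, ← charpoly_toLin',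
    ← Module.End.hasEigenvalue_iff_isRoot_charpoly] at hμ
  simpa only [Metric.mem_closedBall, dist_eq_norm, transpose_apply] using eigenvalue_mem_ball hμ

theorem Matrix.eq_zero_of_isRoot_charpoly_of_re_eq_zero {ι : Type*} [Fintype ι] [DecidableEq ι]
    {A : Matrix ι ι ℝ} (hoff : ∀ i k, i ≠ k → 0 ≤ A i k) (hcol : ∀ k, ∑ i, A i k ≤ 0) {z : ℂ}
    (hz : (A.map (fun x : ℝ => (x : ℂ))).charpoly.IsRoot z) (hre : z.re = 0) : z = 0 := by
  obtain ⟨k, hk⟩ := exists_norm_sub_diag_le_sum_col hz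
  refine Complex.eq_zero_of_re_eq_zero_of_norm_sub_ofReal_le hre (a := A k k) ?_
  calc ‖z - A k k‖ ≤ ∑ i ∈ univ.erase k, ‖((A i k : ℝ) : ℂ)‖ := hk
    _ = ∑ i ∈ univ.erase k, A i k := by
      refine sum_congr rfl fun i hi => ?_
      rw [Complex.norm_real, Real.norm_of_nonneg (hoff i k (ne_of_mem_erase hi))]
    _ = ∑ i, A i k - A k k := sum_erase_eq_sub (mem_univ k)
    _ ≤ -A k k := by linarith [hcol k]

namespace NetworkJacobian

variable {N : ℕ} (G : NetworkJacobian N)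

theorem J_add_diagonal_d_apply (i u : Fin N) :
    (G.J + diagonal G.d) i u =
      (if (i, u) ∈ G.E then G.n i u else 0) + (if (u, i) ∈ G.E then G.p u i else 0)
        - if i = u then
            (∑ k ∈ univ.filter fun k => (k, u) ∈ G.E, G.n k u)
              + ∑ j ∈ univ.filter fun j => (u, j) ∈ G.E, G.p u j
          else 0 := by
  rw [Matrix.add_apply, J]
  by_cases hiu : i = u
  · subst hiu
    have hloop : (i, i) ∉ G.E := fun h => G.no_self_loops _ h rfl
    simp only [if_true, hloop, if_false, diagonal_apply_eq]
    ring
  · rw [diagonal_apply_ne _ hiu]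
    by_cases hE : (i, u) ∈ G.E
    · simp [hiu, hE, G.antisymm i u hE]
    · simp [hiu, hE]

theorem J_add_diagonal_d_nonneg_of_ne {i u : Fin N} (hiu : i ≠ u) :
    0 ≤ (G.J + diagonal G.d) i u := by
  rw [J_add_diagonal_d_apply, if_neg hiu, sub_zero]
  refine add_nonneg ?_ ?_
  · split_ifs with h
    exacts [(G.n_pos _ h).le, le_rfl]
  · split_ifs with h
    exacts [(G.p_pos _ h).le, le_rfl]

theorem sum_J_add_diagonal_d_col (u : Fin N) : ∑ i, (G.J + diagonal G.d) i u = 0 := by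
  simp only [J_add_diagonal_d_apply, sum_sub_distrib, sum_add_distrib, sum_ite_eq', mem_univ,
    if_true, ← sum_filter]
  ring

end NetworkJacobian

/-- **Step 2 of the proof of Lemma 5.** The matrix `J₀ = J + diag(d)`
(the network Jacobian with all `d i` set to `0`) has no nonzero purely
imaginary eigenvalue: every complex root `z` of its characteristic
polynomial with `Re z = 0` satisfies `z = 0`. -/
theorem stmt11 {N : ℕ} (G : NetworkJacobian N) :
    ∀ z : ℂ,
      ((G.J + Matrix.diagonal G.d).map (fun x : ℝ => (x : ℂ))).charpoly.IsRoot z →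
      z.re = 0 → z = 0 :=
  fun _ hz hre => Matrix.eq_zero_of_isRoot_charpoly_of_re_eq_zero
    (fun _ _ h => G.J_add_diagonal_d_nonneg_of_ne h) (fun u => (G.sum_J_add_diagonal_d_col u).le)
    hz hre
end

section
/- Let J be a network Jacobian and let J₀ = J + diag(d₀,…,d_{N−1}) be the corresponding matrix with all d_i set to 0. Let δ ∈ ℝ^N have δ_i > 0 for all i and satisfy J₀ δ = 0. Set a_i = 1/δ_i, A = diag(a₀,…,a_{N−1}), α_{ij} = −(δ_i p_{ij} + δ_j n_{ij}) for each edge (i,j) ∈ E, and Q = A J + Jᵀ A. Then for every z ∈ ℝ^N the quadratic-form identity holds: zᵀ Q z = Σ_{(i,j)∈E} α_{ij} (a_i z_i − a_j z_j)² − 2 Σ_{i} a_i d_i z_i². (This is identity (7) in the paper's proof of Theorem 1.) -/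
open scoped Matrix

theorem my_sum_out {N : ℕ} (E : Finset (Fin N × Fin N)) (f : Fin N → Fin N → ℝ) :
    ∑ i, ∑ j ∈ Finset.univ.filter (fun j => (i, j) ∈ E), f i j = ∑ e ∈ E, f e.1 e.2 := by
  simp only [Finset.sum_filter]
  rw [← Finset.sum_product', Finset.univ_product_univ, ← Finset.sum_filter,
    Finset.filter_univ_mem]

theorem my_sum_in {N : ℕ} (E : Finset (Fin N × Fin N)) (f : Fin N → Fin N → ℝ) :
    ∑ u, ∑ k ∈ Finset.univ.filter (fun k => (k, u) ∈ E), f k u = ∑ e ∈ E, f e.1 e.2 := by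
  simp only [Finset.sum_filter]
  rw [Finset.sum_comm, ← Finset.sum_product', Finset.univ_product_univ, ← Finset.sum_filter,
    Finset.filter_univ_mem]

/-- **Identity (7)** in the proof of Theorem 1.  Let `J₀ = J + diag(d)`, let
`δ > 0` satisfy `J₀ δ = 0`, set `a i = (δ i)⁻¹`, `A = diag a`,
`α i j = −(δ i * p i j + δ j * n i j)` for `(i,j) ∈ E`, and
`Q = A J + Jᵀ A`.  Then for every `z ∈ ℝ^N`,
`zᵀ Q z = Σ_{(i,j)∈E} α i j (a i z i − a j z j)² − 2 Σ_i a i d i z i²`. -/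
theorem stmt12 {N : ℕ} (G : NetworkJacobian N) (δ : Fin N → ℝ)
    (hδpos : ∀ i, 0 < δ i)
    (hδ : (G.J + Matrix.diagonal G.d).mulVec δ = 0) :
    ∀ z : Fin N → ℝ,
      z ⬝ᵥ ((Matrix.diagonal (fun i => (δ i)⁻¹) * G.J
          + G.J.transpose * Matrix.diagonal (fun i => (δ i)⁻¹)).mulVec z)
        = ∑ e ∈ G.E,
            (-(δ e.1 * G.p e.1 e.2 + δ e.2 * G.n e.1 e.2))
              * ((δ e.1)⁻¹ * z e.1 - (δ e.2)⁻¹ * z e.2) ^ 2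
          - 2 * ∑ i, (δ i)⁻¹ * G.d i * z i ^ 2 := by
  intro z
  have hδne : ∀ i, δ i ≠ 0 := fun i => ne_of_gt (hδpos i)
  -- entry decomposition
  have hJ : ∀ i u, G.J i u = (if i = u then
        -(∑ k ∈ Finset.univ.filter fun k => (k, u) ∈ G.E, G.n k u)
          - (∑ j ∈ Finset.univ.filter fun j => (u, j) ∈ G.E, G.p u j) - G.d u else 0)
      + (if (i, u) ∈ G.E then G.n i u else 0) + (if (u, i) ∈ G.E then G.p u i else 0) := by
    intro i u
    unfold NetworkJacobian.J
    by_cases h1 : i = u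
    · subst h1
      have h2 : (i, i) ∉ G.E := fun h => G.no_self_loops _ h rfl
      simp [h2]
    · simp only [if_neg h1]
      by_cases h2 : (i, u) ∈ G.E
      · have h3 := G.antisymm i u h2
        simp [h2, h3]
      · by_cases h3 : (u, i) ∈ G.E <;> simp [h2, h3]
  -- row sums
  have hrow : ∀ (i : Fin N) (v : Fin N → ℝ),
      ∑ u, G.J i u * v u
        = (-(∑ k ∈ Finset.univ.filter fun k => (k, i) ∈ G.E, G.n k i)
            - (∑ j ∈ Finset.univ.filter fun j => (i, j) ∈ G.E, G.p i j) - G.d i) * v i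
        + ∑ j ∈ Finset.univ.filter (fun j => (i, j) ∈ G.E), G.n i j * v j
        + ∑ k ∈ Finset.univ.filter (fun k => (k, i) ∈ G.E), G.p k i * v k := by
    intro i v
    simp only [hJ, add_mul, Finset.sum_add_distrib, ite_mul, zero_mul]
    congr 1
    congr 1
    · exact (Finset.sum_ite_eq Finset.univ i _).trans (by simp)
    · rw [Finset.sum_filter]
    · rw [Finset.sum_filter]
  -- per-vertex constraint from J₀ δ = 0
  have hc : ∀ u : Fin N,
      (∑ j ∈ Finset.univ.filter (fun j => (u, j) ∈ G.E), G.n u j * δ j)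
        + (∑ k ∈ Finset.univ.filter (fun k => (k, u) ∈ G.E), G.p k u * δ k)
      = δ u * ((∑ k ∈ Finset.univ.filter fun k => (k, u) ∈ G.E, G.n k u)
          + (∑ j ∈ Finset.univ.filter fun j => (u, j) ∈ G.E, G.p u j)) := by
    intro u
    have h0 := congrFun hδ u
    simp only [Matrix.mulVec, dotProduct, Matrix.add_apply, Pi.zero_apply] at h0
    simp only [add_mul, Finset.sum_add_distrib, Matrix.diagonal_apply, ite_mul, zero_mul] at h0
    rw [hrow u δ, Finset.sum_ite_eq Finset.univ u (fun x => G.d u * δ x)] at h0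
    simp only [Finset.mem_univ, if_true] at h0
    linear_combination h0
  -- LHS as a double sum
  have lhs_eq : z ⬝ᵥ ((Matrix.diagonal (fun i => (δ i)⁻¹) * G.J
        + G.J.transpose * Matrix.diagonal (fun i => (δ i)⁻¹)).mulVec z)
      = 2 * ∑ i, (δ i)⁻¹ * z i * (∑ u, G.J i u * z u) := by
    simp only [dotProduct, Matrix.mulVec, Matrix.add_apply, Matrix.diagonal_mul,
      Matrix.mul_diagonal, Matrix.transpose_apply]
    have h1 : ∀ i : Fin N, z i * (∑ u, ((δ i)⁻¹ * G.J i u + G.J u i * (δ u)⁻¹) * z u)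
        = (∑ u, (δ i)⁻¹ * G.J i u * z i * z u)
          + (∑ u, G.J u i * (δ u)⁻¹ * z i * z u) := by
      intro i
      rw [Finset.mul_sum, ← Finset.sum_add_distrib]
      exact Finset.sum_congr rfl fun u _ => by ring
    calc ∑ i, z i * (∑ u, ((δ i)⁻¹ * G.J i u + G.J u i * (δ u)⁻¹) * z u)
        = (∑ i, ∑ u, (δ i)⁻¹ * G.J i u * z i * z u)
          + ∑ i, ∑ u, G.J u i * (δ u)⁻¹ * z i * z u := by
          rw [← Finset.sum_add_distrib]; exact Finset.sum_congr rfl fun i _ => h1 i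
      _ = (∑ i, ∑ u, (δ i)⁻¹ * G.J i u * z i * z u)
          + ∑ u, ∑ i, G.J u i * (δ u)⁻¹ * z i * z u := by
          congr 1
          exact Finset.sum_comm
      _ = 2 * ∑ i, ∑ u, (δ i)⁻¹ * G.J i u * z i * z u := by
          rw [two_mul]
          congr 1
          exact Finset.sum_congr rfl fun u _ => Finset.sum_congr rfl fun i _ => by ring
      _ = 2 * ∑ i, (δ i)⁻¹ * z i * (∑ u, G.J i u * z u) := by
          congr 1
          refine Finset.sum_congr rfl fun i _ => ?_
          rw [Finset.mul_sum]
          exact Finset.sum_congr rfl fun u _ => by ring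
  -- main: the quadratic form as an edge sum
  have main : ∑ i, (δ i)⁻¹ * z i * (∑ u, G.J i u * z u)
      = (∑ e ∈ G.E, (G.n e.1 e.2 * ((δ e.1)⁻¹ * z e.1 * z e.2)
            + G.p e.1 e.2 * ((δ e.2)⁻¹ * z e.2 * z e.1)
            - G.n e.1 e.2 * ((δ e.2)⁻¹ * z e.2 ^ 2)
            - G.p e.1 e.2 * ((δ e.1)⁻¹ * z e.1 ^ 2)))
        - ∑ i, (δ i)⁻¹ * G.d i * z i ^ 2 := by
    have step1 : ∀ i : Fin N, (δ i)⁻¹ * z i * (∑ u, G.J i u * z u)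
        = (∑ j ∈ Finset.univ.filter (fun j => (i, j) ∈ G.E),
              (G.n i j * ((δ i)⁻¹ * z i * z j) - G.p i j * ((δ i)⁻¹ * z i ^ 2)))
          + (∑ k ∈ Finset.univ.filter (fun k => (k, i) ∈ G.E),
              (G.p k i * ((δ i)⁻¹ * z i * z k) - G.n k i * ((δ i)⁻¹ * z i ^ 2)))
          - (δ i)⁻¹ * G.d i * z i ^ 2 := by
      intro i
      rw [hrow i z]
      rw [Finset.sum_sub_distrib, Finset.sum_sub_distrib, ← Finset.sum_mul, ← Finset.sum_mul]
      have e1 : (δ i)⁻¹ * z i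
            * (∑ j ∈ Finset.univ.filter (fun j => (i, j) ∈ G.E), G.n i j * z j)
          = ∑ j ∈ Finset.univ.filter (fun j => (i, j) ∈ G.E),
              G.n i j * ((δ i)⁻¹ * z i * z j) := by
        rw [Finset.mul_sum]; exact Finset.sum_congr rfl fun j _ => by ring
      have e2 : (δ i)⁻¹ * z i
            * (∑ k ∈ Finset.univ.filter (fun k => (k, i) ∈ G.E), G.p k i * z k)
          = ∑ k ∈ Finset.univ.filter (fun k => (k, i) ∈ G.E),
              G.p k i * ((δ i)⁻¹ * z i * z k) := by
        rw [Finset.mul_sum]; exact Finset.sum_congr rfl fun k _ => by ring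
      rw [← e1, ← e2]
      ring
    rw [Finset.sum_congr rfl fun i _ => step1 i, Finset.sum_sub_distrib,
      Finset.sum_add_distrib,
      my_sum_out G.E (fun i j => G.n i j * ((δ i)⁻¹ * z i * z j)
        - G.p i j * ((δ i)⁻¹ * z i ^ 2)),
      my_sum_in G.E (fun k i => G.p k i * ((δ i)⁻¹ * z i * z k)
        - G.n k i * ((δ i)⁻¹ * z i ^ 2)),
      ← Finset.sum_add_distrib]
    congr 1
    exact Finset.sum_congr rfl fun e _ => by ring
  -- summed constraint as an edge-sum identity
  have hC : ∑ e ∈ G.E, ((δ e.1)⁻¹ ^ 2 * z e.1 ^ 2 * (G.n e.1 e.2 * δ e.2)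
        + (δ e.2)⁻¹ ^ 2 * z e.2 ^ 2 * (G.p e.1 e.2 * δ e.1))
      = ∑ e ∈ G.E, ((δ e.2)⁻¹ ^ 2 * z e.2 ^ 2 * δ e.2 * G.n e.1 e.2
        + (δ e.1)⁻¹ ^ 2 * z e.1 ^ 2 * δ e.1 * G.p e.1 e.2) := by
    calc ∑ e ∈ G.E, ((δ e.1)⁻¹ ^ 2 * z e.1 ^ 2 * (G.n e.1 e.2 * δ e.2)
          + (δ e.2)⁻¹ ^ 2 * z e.2 ^ 2 * (G.p e.1 e.2 * δ e.1))
        = (∑ u, (δ u)⁻¹ ^ 2 * z u ^ 2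
              * (∑ j ∈ Finset.univ.filter (fun j => (u, j) ∈ G.E), G.n u j * δ j))
          + ∑ u, (δ u)⁻¹ ^ 2 * z u ^ 2
              * (∑ k ∈ Finset.univ.filter (fun k => (k, u) ∈ G.E), G.p k u * δ k) := by
          rw [Finset.sum_add_distrib,
            ← my_sum_out G.E (fun u j => (δ u)⁻¹ ^ 2 * z u ^ 2 * (G.n u j * δ j)),
            ← my_sum_in G.E (fun k u => (δ u)⁻¹ ^ 2 * z u ^ 2 * (G.p k u * δ k))]
          congr 1
          · exact Finset.sum_congr rfl fun u _ => (Finset.mul_sum _ _ _).symm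
          · exact Finset.sum_congr rfl fun u _ => (Finset.mul_sum _ _ _).symm
      _ = (∑ u, (δ u)⁻¹ ^ 2 * z u ^ 2 * δ u
              * (∑ k ∈ Finset.univ.filter (fun k => (k, u) ∈ G.E), G.n k u))
          + ∑ u, (δ u)⁻¹ ^ 2 * z u ^ 2 * δ u
              * (∑ j ∈ Finset.univ.filter (fun j => (u, j) ∈ G.E), G.p u j) := by
          rw [← Finset.sum_add_distrib, ← Finset.sum_add_distrib]
          refine Finset.sum_congr rfl fun u _ => ?_
          linear_combination ((δ u)⁻¹ ^ 2 * z u ^ 2) * hc u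
      _ = ∑ e ∈ G.E, ((δ e.2)⁻¹ ^ 2 * z e.2 ^ 2 * δ e.2 * G.n e.1 e.2
          + (δ e.1)⁻¹ ^ 2 * z e.1 ^ 2 * δ e.1 * G.p e.1 e.2) := by
          rw [Finset.sum_add_distrib,
            ← my_sum_in G.E (fun k u => (δ u)⁻¹ ^ 2 * z u ^ 2 * δ u * G.n k u),
            ← my_sum_out G.E (fun u j => (δ u)⁻¹ ^ 2 * z u ^ 2 * δ u * G.p u j)]
          congr 1
          · exact Finset.sum_congr rfl fun u _ => Finset.mul_sum _ _ _
          · exact Finset.sum_congr rfl fun u _ => Finset.mul_sum _ _ _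
  -- put everything together
  rw [lhs_eq, main, mul_sub, Finset.mul_sum]
  have key : ∑ e ∈ G.E, 2 * (G.n e.1 e.2 * ((δ e.1)⁻¹ * z e.1 * z e.2)
        + G.p e.1 e.2 * ((δ e.2)⁻¹ * z e.2 * z e.1)
        - G.n e.1 e.2 * ((δ e.2)⁻¹ * z e.2 ^ 2)
        - G.p e.1 e.2 * ((δ e.1)⁻¹ * z e.1 ^ 2))
      = ∑ e ∈ G.E, (-(δ e.1 * G.p e.1 e.2 + δ e.2 * G.n e.1 e.2))
          * ((δ e.1)⁻¹ * z e.1 - (δ e.2)⁻¹ * z e.2) ^ 2 := by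
    have h3 : ∀ e ∈ G.E, 2 * (G.n e.1 e.2 * ((δ e.1)⁻¹ * z e.1 * z e.2)
          + G.p e.1 e.2 * ((δ e.2)⁻¹ * z e.2 * z e.1)
          - G.n e.1 e.2 * ((δ e.2)⁻¹ * z e.2 ^ 2)
          - G.p e.1 e.2 * ((δ e.1)⁻¹ * z e.1 ^ 2))
        = (-(δ e.1 * G.p e.1 e.2 + δ e.2 * G.n e.1 e.2))
            * ((δ e.1)⁻¹ * z e.1 - (δ e.2)⁻¹ * z e.2) ^ 2
          + (((δ e.1)⁻¹ ^ 2 * z e.1 ^ 2 * (G.n e.1 e.2 * δ e.2)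
              + (δ e.2)⁻¹ ^ 2 * z e.2 ^ 2 * (G.p e.1 e.2 * δ e.1))
            - ((δ e.2)⁻¹ ^ 2 * z e.2 ^ 2 * δ e.2 * G.n e.1 e.2
              + (δ e.1)⁻¹ ^ 2 * z e.1 ^ 2 * δ e.1 * G.p e.1 e.2)) := by
      intro e _
      have h4 : δ e.1 * (δ e.1)⁻¹ = 1 := mul_inv_cancel₀ (hδne e.1)
      have h5 : δ e.2 * (δ e.2)⁻¹ = 1 := mul_inv_cancel₀ (hδne e.2)
      linear_combination (2 * G.p e.1 e.2 * (δ e.1)⁻¹ * z e.1 ^ 2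
          - 2 * G.p e.1 e.2 * (δ e.2)⁻¹ * z e.1 * z e.2) * h4
        + (2 * G.n e.1 e.2 * (δ e.2)⁻¹ * z e.2 ^ 2
          - 2 * G.n e.1 e.2 * (δ e.1)⁻¹ * z e.1 * z e.2) * h5
    rw [Finset.sum_congr rfl h3, Finset.sum_add_distrib, Finset.sum_sub_distrib, hC]
    ring
  rw [← key, Finset.mul_sum]
end

section
/- Let J be a network Jacobian with d_i > 0 for at least one vertex i, let J₀ = J + diag(d), and let δ ∈ ℝ^N with δ_i > 0 for all i satisfy J₀ δ = 0. Set A = diag(1/δ₀,…,1/δ_{N−1}) and Q = A J + Jᵀ A. Then Q is negative definite: zᵀ Q z < 0 for every nonzero z ∈ ℝ^N. (This is the key conclusion of the paper's proof of Theorem 1, which together with the Lyapunov criterion yields that all eigenvalues of J have negative real parts.) -/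
open scoped Matrix

lemma edge_sum_eq {N : ℕ} (E : Finset (Fin N × Fin N)) (f : Fin N × Fin N → ℝ) :
    ∑ e ∈ E, f e = ∑ i, ∑ u, if (i, u) ∈ E then f (i, u) else 0 := by
  rw [← Finset.sum_product', Finset.univ_product_univ, Finset.sum_ite_mem, Finset.univ_inter]

lemma key {N : ℕ} (G : NetworkJacobian N) (x y : Fin N → ℝ) :
    ∑ i, x i * (G.J.mulVec y) i
      = ∑ e ∈ G.E, (G.n e.1 e.2 * (x e.1 * y e.2 - x e.2 * y e.2)
          + G.p e.1 e.2 * (x e.2 * y e.1 - x e.1 * y e.1))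
        - ∑ i, G.d i * (x i * y i) := by
  have hrow : ∀ i, x i * (G.J.mulVec y) i
      = (∑ u, if (i, u) ∈ G.E then G.n i u * (x i * y u) else 0)
        + (∑ u, if (u, i) ∈ G.E then G.p u i * (x i * y u) else 0)
        - (∑ u, if (u, i) ∈ G.E then G.n u i * (x i * y i) else 0)
        - (∑ u, if (i, u) ∈ G.E then G.p i u * (x i * y i) else 0)
        - G.d i * (x i * y i) := by
    intro i
    have hmv : (G.J.mulVec y) i = ∑ u, G.J i u * y u := by
      simp [Matrix.mulVec, dotProduct]
    have hpt : ∀ u, x i * (G.J i u * y u)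
        = (if (i, u) ∈ G.E then G.n i u * (x i * y u) else 0)
          + (if (u, i) ∈ G.E then G.p u i * (x i * y u) else 0)
          + (if i = u then x i * (G.J i i * y i) else 0) := by
      intro u
      by_cases hiu : i = u
      · subst hiu
        have h1 : (i, i) ∉ G.E := fun h => G.no_self_loops _ h rfl
        simp [h1]
      · have h3 : ¬ (i = u) := hiu
        by_cases h1 : (i, u) ∈ G.E
        · have h2 : (u, i) ∉ G.E := G.antisymm i u h1
          simp [NetworkJacobian.J, h1, h2, h3]
          ring
        · by_cases h2 : (u, i) ∈ G.E
          · simp [NetworkJacobian.J, h1, h2, h3]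
            ring
          · simp [NetworkJacobian.J, h1, h2, h3]
    have hdiag : ∑ u, (if i = u then x i * (G.J i i * y i) else 0)
        = x i * (G.J i i * y i) := by
      simp
    have hJii : x i * (G.J i i * y i)
        = -(∑ u, if (u, i) ∈ G.E then G.n u i * (x i * y i) else 0)
          - (∑ u, if (i, u) ∈ G.E then G.p i u * (x i * y i) else 0)
          - G.d i * (x i * y i) := by
      have hJ : G.J i i = -(∑ k ∈ Finset.univ.filter fun k => (k, i) ∈ G.E, G.n k i)
          - (∑ j ∈ Finset.univ.filter fun j => (i, j) ∈ G.E, G.p i j) - G.d i := by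
        simp [NetworkJacobian.J]
      have e1 : ∑ u, (if (u, i) ∈ G.E then G.n u i * (x i * y i) else 0)
          = (∑ u, if (u, i) ∈ G.E then G.n u i else 0) * (x i * y i) := by
        rw [Finset.sum_mul]; exact Finset.sum_congr rfl (fun u _ => by split <;> simp)
      have e2 : ∑ u, (if (i, u) ∈ G.E then G.p i u * (x i * y i) else 0)
          = (∑ u, if (i, u) ∈ G.E then G.p i u else 0) * (x i * y i) := by
        rw [Finset.sum_mul]; exact Finset.sum_congr rfl (fun u _ => by split <;> simp)
      rw [hJ, Finset.sum_filter, Finset.sum_filter, e1, e2]; ring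
    calc x i * (G.J.mulVec y) i = ∑ u, x i * (G.J i u * y u) := by
          rw [hmv, Finset.mul_sum]
      _ = ∑ u, ((if (i, u) ∈ G.E then G.n i u * (x i * y u) else 0)
            + (if (u, i) ∈ G.E then G.p u i * (x i * y u) else 0)
            + (if i = u then x i * (G.J i i * y i) else 0)) :=
          Finset.sum_congr rfl (fun u _ => hpt u)
      _ = (∑ u, if (i, u) ∈ G.E then G.n i u * (x i * y u) else 0)
            + (∑ u, if (u, i) ∈ G.E then G.p u i * (x i * y u) else 0)
            + (∑ u, if i = u then x i * (G.J i i * y i) else 0) := by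
          rw [Finset.sum_add_distrib, Finset.sum_add_distrib]
      _ = _ := by rw [hdiag, hJii]; ring
  have t1 : ∑ i, ∑ u, (if (i, u) ∈ G.E then G.n i u * (x i * y u) else 0)
      = ∑ e ∈ G.E, G.n e.1 e.2 * (x e.1 * y e.2) := by
    rw [edge_sum_eq G.E (fun e => G.n e.1 e.2 * (x e.1 * y e.2))]
  have t2 : ∑ i, ∑ u, (if (u, i) ∈ G.E then G.p u i * (x i * y u) else 0)
      = ∑ e ∈ G.E, G.p e.1 e.2 * (x e.2 * y e.1) := by
    rw [Finset.sum_comm]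
    rw [edge_sum_eq G.E (fun e => G.p e.1 e.2 * (x e.2 * y e.1))]
  have t3 : ∑ i, ∑ u, (if (u, i) ∈ G.E then G.n u i * (x i * y i) else 0)
      = ∑ e ∈ G.E, G.n e.1 e.2 * (x e.2 * y e.2) := by
    rw [Finset.sum_comm]
    rw [edge_sum_eq G.E (fun e => G.n e.1 e.2 * (x e.2 * y e.2))]
  have t4 : ∑ i, ∑ u, (if (i, u) ∈ G.E then G.p i u * (x i * y i) else 0)
      = ∑ e ∈ G.E, G.p e.1 e.2 * (x e.1 * y e.1) := by
    rw [edge_sum_eq G.E (fun e => G.p e.1 e.2 * (x e.1 * y e.1))]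
  calc ∑ i, x i * (G.J.mulVec y) i
      = ∑ i, ((∑ u, if (i, u) ∈ G.E then G.n i u * (x i * y u) else 0)
        + (∑ u, if (u, i) ∈ G.E then G.p u i * (x i * y u) else 0)
        - (∑ u, if (u, i) ∈ G.E then G.n u i * (x i * y i) else 0)
        - (∑ u, if (i, u) ∈ G.E then G.p i u * (x i * y i) else 0)
        - G.d i * (x i * y i)) := Finset.sum_congr rfl fun i _ => hrow i
    _ = (∑ i, ∑ u, (if (i, u) ∈ G.E then G.n i u * (x i * y u) else 0))
        + (∑ i, ∑ u, (if (u, i) ∈ G.E then G.p u i * (x i * y u) else 0))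
        - (∑ i, ∑ u, (if (u, i) ∈ G.E then G.n u i * (x i * y i) else 0))
        - (∑ i, ∑ u, (if (i, u) ∈ G.E then G.p i u * (x i * y i) else 0))
        - ∑ i, G.d i * (x i * y i) := by
        rw [Finset.sum_sub_distrib, Finset.sum_sub_distrib, Finset.sum_sub_distrib,
          Finset.sum_add_distrib]
    _ = (∑ e ∈ G.E, G.n e.1 e.2 * (x e.1 * y e.2))
        + (∑ e ∈ G.E, G.p e.1 e.2 * (x e.2 * y e.1))
        - (∑ e ∈ G.E, G.n e.1 e.2 * (x e.2 * y e.2))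
        - (∑ e ∈ G.E, G.p e.1 e.2 * (x e.1 * y e.1))
        - ∑ i, G.d i * (x i * y i) := by rw [t1, t2, t3, t4]
    _ = _ := by
        rw [← Finset.sum_add_distrib, ← Finset.sum_sub_distrib, ← Finset.sum_sub_distrib]
        congr 1
        exact Finset.sum_congr rfl fun e _ => by ring

lemma const_of_edges {N : ℕ} (G : NetworkJacobian N) (x : Fin N → ℝ)
    (h : ∀ e ∈ G.E, x e.1 = x e.2) : ∀ u v, x u = x v := by
  intro u v
  obtain ⟨w⟩ := G.connected.preconnected u v
  induction w with
  | nil => rfl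
  | cons hadj _ ih =>
    rw [SimpleGraph.fromRel_adj] at hadj
    obtain ⟨hne, hcase | hcase⟩ := hadj
    · exact (h _ hcase).trans ih
    · exact ((h _ hcase).symm).trans ih


/-- **Key conclusion of the proof of Theorem 1.**  Suppose `d i > 0` for at
least one vertex `i`, let `J₀ = J + diag(d)` and let `δ > 0` satisfy
`J₀ δ = 0`.  With `A = diag((δ i)⁻¹)` and `Q = A J + Jᵀ A`, the matrix `Q`
is negative definite: `zᵀ Q z < 0` for every nonzero `z ∈ ℝ^N`. -/
theorem stmt13 {N : ℕ} (G : NetworkJacobian N) (hd : ∃ i, 0 < G.d i)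
    (δ : Fin N → ℝ) (hδpos : ∀ i, 0 < δ i)
    (hδ : (G.J + Matrix.diagonal G.d).mulVec δ = 0) :
    ∀ z : Fin N → ℝ, z ≠ 0 →
      z ⬝ᵥ ((Matrix.diagonal (fun i => (δ i)⁻¹) * G.J
          + G.J.transpose * Matrix.diagonal (fun i => (δ i)⁻¹)).mulVec z) < 0 := by
  intro z hz
  set x : Fin N → ℝ := fun i => (δ i)⁻¹ * z i with hxdef
  have hδne : ∀ i, δ i ≠ 0 := fun i => ne_of_gt (hδpos i)
  have hzx : ∀ i, z i = δ i * x i := by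
    intro i; simp only [hxdef]; rw [← mul_assoc, mul_inv_cancel₀ (hδne i), one_mul]
  -- reduce the quadratic form to 2 ∑ x i * (J z) i
  have hQ : z ⬝ᵥ ((Matrix.diagonal (fun i => (δ i)⁻¹) * G.J
      + G.J.transpose * Matrix.diagonal (fun i => (δ i)⁻¹)).mulVec z)
      = 2 * ∑ i, x i * (G.J.mulVec z) i := by
    rw [Matrix.add_mulVec, dotProduct_add, ← Matrix.mulVec_mulVec, ← Matrix.mulVec_mulVec,
      Matrix.dotProduct_mulVec z G.J.transpose, Matrix.vecMul_transpose]
    simp only [dotProduct, Matrix.mulVec_diagonal]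
    rw [Finset.mul_sum, ← Finset.sum_add_distrib]
    exact Finset.sum_congr rfl fun i _ => by simp only [hxdef]; ring
  -- the main edge decomposition applied to (x, z)
  have hkey1 := key G x z
  -- per-edge algebraic identity after substituting z = δ * x
  have hedge : ∀ e ∈ G.E, G.n e.1 e.2 * (x e.1 * z e.2 - x e.2 * z e.2)
      + G.p e.1 e.2 * (x e.2 * z e.1 - x e.1 * z e.1)
      = -((G.n e.1 e.2 * δ e.2 + G.p e.1 e.2 * δ e.1) * (x e.1 - x e.2) ^ 2) / 2
        + (G.n e.1 e.2 * δ e.2 - G.p e.1 e.2 * δ e.1) * ((x e.1) ^ 2 - (x e.2) ^ 2) / 2 := by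
    intro e _; rw [hzx e.1, hzx e.2]; ring
  -- equilibrium: J δ = -(d * δ) pointwise
  have hJδ : ∀ i, (G.J.mulVec δ) i = -(G.d i * δ i) := by
    intro i
    have h0 : ((G.J + Matrix.diagonal G.d).mulVec δ) i = 0 := by rw [hδ]; rfl
    rw [Matrix.add_mulVec] at h0
    have h1 : (Matrix.diagonal G.d *ᵥ δ) i = G.d i * δ i := Matrix.mulVec_diagonal _ _ _
    have h2 : (G.J *ᵥ δ) i + (Matrix.diagonal G.d *ᵥ δ) i = 0 := h0
    rw [h1] at h2; linarith
  -- circulation identity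
  have hkey2 := key G (fun i => x i ^ 2) δ
  have hlhs2 : ∑ i, (fun i => x i ^ 2) i * (G.J.mulVec δ) i
      = -∑ i, G.d i * (x i ^ 2 * δ i) := by
    rw [← Finset.sum_neg_distrib]
    exact Finset.sum_congr rfl fun i _ => by rw [hJδ i]; ring
  have hcirc : ∑ e ∈ G.E, (G.n e.1 e.2 * δ e.2 - G.p e.1 e.2 * δ e.1)
      * ((x e.1) ^ 2 - (x e.2) ^ 2) = 0 := by
    have h3 : ∑ i, G.d i * ((fun i => x i ^ 2) i * δ i) = ∑ i, G.d i * (x i ^ 2 * δ i) := rfl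
    rw [hlhs2, h3] at hkey2
    have h4 : ∑ e ∈ G.E, (G.n e.1 e.2 * ((fun i => x i ^ 2) e.1 * δ e.2
        - (fun i => x i ^ 2) e.2 * δ e.2)
        + G.p e.1 e.2 * ((fun i => x i ^ 2) e.2 * δ e.1
        - (fun i => x i ^ 2) e.1 * δ e.1)) = 0 := by linarith
    rw [← h4]
    exact Finset.sum_congr rfl fun e _ => by simp only []; ring
  -- value of the quadratic form
  have hdsub : ∑ i, G.d i * (x i * z i) = ∑ i, G.d i * (δ i * x i ^ 2) :=
    Finset.sum_congr rfl fun i _ => by rw [hzx i]; ring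
  have hsum5 : ∑ e ∈ G.E, (G.n e.1 e.2 * (x e.1 * z e.2 - x e.2 * z e.2)
      + G.p e.1 e.2 * (x e.2 * z e.1 - x e.1 * z e.1))
      = ∑ e ∈ G.E, (-((G.n e.1 e.2 * δ e.2 + G.p e.1 e.2 * δ e.1) * (x e.1 - x e.2) ^ 2) / 2
        + (G.n e.1 e.2 * δ e.2 - G.p e.1 e.2 * δ e.1) * ((x e.1) ^ 2 - (x e.2) ^ 2) / 2) :=
    Finset.sum_congr rfl hedge
  have hAB : ∑ e ∈ G.E, (-((G.n e.1 e.2 * δ e.2 + G.p e.1 e.2 * δ e.1) * (x e.1 - x e.2) ^ 2) / 2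
        + (G.n e.1 e.2 * δ e.2 - G.p e.1 e.2 * δ e.1) * ((x e.1) ^ 2 - (x e.2) ^ 2) / 2)
      = -(∑ e ∈ G.E, (G.n e.1 e.2 * δ e.2 + G.p e.1 e.2 * δ e.1) * (x e.1 - x e.2) ^ 2) / 2
        + (∑ e ∈ G.E, (G.n e.1 e.2 * δ e.2 - G.p e.1 e.2 * δ e.1)
            * ((x e.1) ^ 2 - (x e.2) ^ 2)) / 2 := by
    rw [Finset.sum_add_distrib, ← Finset.sum_div, ← Finset.sum_div, ← Finset.sum_neg_distrib]
  have hSval : z ⬝ᵥ ((Matrix.diagonal (fun i => (δ i)⁻¹) * G.J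
      + G.J.transpose * Matrix.diagonal (fun i => (δ i)⁻¹)).mulVec z)
      = -(∑ e ∈ G.E, (G.n e.1 e.2 * δ e.2 + G.p e.1 e.2 * δ e.1) * (x e.1 - x e.2) ^ 2)
        - 2 * ∑ i, G.d i * (δ i * x i ^ 2) := by
    rw [hQ, hkey1, hsum5, hAB, hcirc, hdsub]; ring
  -- nonnegativity of the two pieces
  have hSNnonneg : 0 ≤ ∑ e ∈ G.E, (G.n e.1 e.2 * δ e.2 + G.p e.1 e.2 * δ e.1)
      * (x e.1 - x e.2) ^ 2 :=
    Finset.sum_nonneg fun e he => mul_nonneg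
      (add_nonneg (mul_nonneg (G.n_pos e he).le (hδpos e.2).le)
        (mul_nonneg (G.p_pos e he).le (hδpos e.1).le)) (sq_nonneg _)
  have hDnonneg : ∀ i ∈ Finset.univ, 0 ≤ G.d i * (δ i * x i ^ 2) := fun i _ =>
    mul_nonneg (G.d_nonneg i) (mul_nonneg (hδpos i).le (sq_nonneg _))
  have hDsum : 0 ≤ ∑ i, G.d i * (δ i * x i ^ 2) := Finset.sum_nonneg hDnonneg
  rw [hSval]
  by_cases hconst : ∀ e ∈ G.E, x e.1 = x e.2
  · -- x is constant; the departure term is strictly positive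
    obtain ⟨i0, hd0⟩ := hd
    obtain ⟨i1, hz1⟩ : ∃ i, z i ≠ 0 := Function.ne_iff.mp hz
    have hx1 : x i1 ≠ 0 := fun h => hz1 (by rw [hzx i1, h, mul_zero])
    have hx0 : x i0 ≠ 0 := by rw [const_of_edges G x hconst i0 i1]; exact hx1
    have hpos : 0 < ∑ i, G.d i * (δ i * x i ^ 2) :=
      Finset.sum_pos' hDnonneg ⟨i0, Finset.mem_univ _,
        mul_pos hd0 (mul_pos (hδpos i0) (pow_two_pos_of_ne_zero hx0))⟩
    linarith
  · -- some edge has x e.1 ≠ x e.2; the edge term is strictly positive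
    push_neg at hconst
    obtain ⟨e, he, hne⟩ := hconst
    have hterm : 0 < (G.n e.1 e.2 * δ e.2 + G.p e.1 e.2 * δ e.1) * (x e.1 - x e.2) ^ 2 :=
      mul_pos (add_pos (mul_pos (G.n_pos e he) (hδpos e.2))
        (mul_pos (G.p_pos e he) (hδpos e.1)))
        (by have := sub_ne_zero.mpr hne; positivity)
    have hpos : 0 < ∑ e ∈ G.E, (G.n e.1 e.2 * δ e.2 + G.p e.1 e.2 * δ e.1)
        * (x e.1 - x e.2) ^ 2 :=
      Finset.sum_pos' (fun f hf => mul_nonneg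
        (add_nonneg (mul_nonneg (G.n_pos f hf).le (hδpos f.2).le)
          (mul_nonneg (G.p_pos f hf).le (hδpos f.1).le)) (sq_nonneg _)) ⟨e, he, hterm⟩
    linarith
end
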